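/- arXiv:2008.06324 — 5 statements merged into one kernel-verified Lean document; each statement's English description precedes it below -/
import Mathlib

section
/- For every S ∈ Sym₃,σ(ℝ), the pair (Φ₀, P₀) solves the homogeneous Stokes equations on ℝ³∖{0}: for every x ≠ 0, ΔΦ₀(x) = ∇P₀(x) (componentwise) and div Φ₀(x) = 0. -/
noncomputable section
open MeasureTheory Metric Real Filter

/-- Three-dimensional Euclidean space. -/
abbrev E3 : Type := EuclideanSpace ℝ (Fin 3)

/-- The `i`-th standard basis vector of `ℝ³`. -/
def e3 (i : Fin 3) : E3 := EuclideanSpace.single i 1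

/-- The quadratic form `x · S x`. -/
def quadForm (S : Matrix (Fin 3) (Fin 3) ℝ) (x : E3) : ℝ := ∑ i, ∑ j, x i * S i j * x j

/-- The matrix-vector product `(S x) i`. -/
def mulVec3 (S : Matrix (Fin 3) (Fin 3) ℝ) (x : E3) (i : Fin 3) : ℝ := ∑ j, S i j * x j

/-- The elementary field `Φ₀ = Φ₀^S`. -/
def Phi0 (S : Matrix (Fin 3) (Fin 3) ℝ) (x : E3) (i : Fin 3) : ℝ :=
  -(5/2) * quadForm S x * x i / ‖x‖^5 - mulVec3 S x i / ‖x‖^5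
    + (5/2) * quadForm S x * x i / ‖x‖^7

/-- The elementary pressure `P₀ = P₀^S`. -/
def P0 (S : Matrix (Fin 3) (Fin 3) ℝ) (x : E3) : ℝ := -5 * quadForm S x / ‖x‖^5

/-- Symmetric gradient `D(u) = (∇u + (∇u)ᵀ)/2` of a vector field, as a 3×3 matrix. -/
def symGrad (u : E3 → Fin 3 → ℝ) (x : E3) : Matrix (Fin 3) (Fin 3) ℝ :=
  Matrix.of fun i j => (fderiv ℝ u x (e3 j) i + fderiv ℝ u x (e3 i) j) / 2

/-- Componentwise Laplacian of a vector field: `(Δu)_i = ∑_j ∂_j ∂_j u_i`. -/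
def vecLap (u : E3 → Fin 3 → ℝ) (x : E3) (i : Fin 3) : ℝ :=
  ∑ j, fderiv ℝ (fun y => fderiv ℝ u y (e3 j) i) x (e3 j)

/-- Gradient of a scalar field. -/
def sgrad (p : E3 → ℝ) (x : E3) (i : Fin 3) : ℝ := fderiv ℝ p x (e3 i)

/-- Divergence of a vector field. -/
def divg (u : E3 → Fin 3 → ℝ) (x : E3) : ℝ := ∑ i, fderiv ℝ u x (e3 i) i

/-- Newtonian stress tensor `σ(u,p) = 2 D(u) - p Id`. -/
def stressT (u : E3 → Fin 3 → ℝ) (p : E3 → ℝ) (x : E3) : Matrix (Fin 3) (Fin 3) ℝ :=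
  Matrix.of fun i j => 2 * symGrad u x i j - p x * (if i = j then 1 else 0)

/-- Frobenius norm of a 3×3 matrix. -/
def matNorm (A : Matrix (Fin 3) (Fin 3) ℝ) : ℝ := Real.sqrt (∑ i, ∑ j, (A i j)^2)

/-!
Write `q = x · S x`, `r = |x|`, so that `Φ₀ᵢ = -(5/2) q xᵢ / r⁵ - (S x)ᵢ / r⁵ + (5/2) q xᵢ / r⁷`
and `P₀ = -5 q / r⁵`. In `ℝᵈ`, `Δ r⁻ⁿ = n (n + 2 - d) r⁻ⁿ⁻²`; for a field `p` with
`x · ∇p = m p` (Euler's identity, `p` homogeneous of degree `m`) the product rule gives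
`Δ (p / rⁿ) = Δp / rⁿ + n (n + 2 - d - 2m) p / rⁿ⁺²`, and for a vector field
`div (p / rⁿ) = div p / rⁿ - n (x · p) / rⁿ⁺²`. Since `S` is symmetric and trace-free,
`Δ (q xᵢ) = 4 (S x)ᵢ`, `Δ (S x)ᵢ = 0`, `div (q x) = 5 q` and `div (S x) = tr S = 0`, and both
Stokes equations reduce to identities between the three terms of `Φ₀`.
-/

open Topology

section Partials

variable {ι : Type*} [DecidableEq ι] {f f₁ f₂ : EuclideanSpace ℝ ι → ℝ} {g g₁ g₂ : ι → ℝ}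
  {x : EuclideanSpace ℝ ι}

def HasPartialsAt (f : EuclideanSpace ℝ ι → ℝ) (g : ι → ℝ) (x : EuclideanSpace ℝ ι) : Prop :=
  ∃ L : EuclideanSpace ℝ ι →L[ℝ] ℝ, HasFDerivAt f L x ∧ ∀ j, L (EuclideanSpace.single j 1) = g j

theorem HasPartialsAt.differentiableAt (h : HasPartialsAt f g x) : DifferentiableAt ℝ f x :=
  let ⟨_, hL, _⟩ := h; hL.differentiableAt

theorem hasPartialsAt_const (c : ℝ) (x : EuclideanSpace ℝ ι) :
    HasPartialsAt (fun _ => c) (fun _ => 0) x :=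
  ⟨0, hasFDerivAt_const c x, fun _ => rfl⟩

theorem hasPartialsAt_apply (i : ι) (x : EuclideanSpace ℝ ι) :
    HasPartialsAt (fun y => y i) (fun j => if i = j then 1 else 0) x :=
  ⟨EuclideanSpace.proj i, (EuclideanSpace.proj (𝕜 := ℝ) i).hasFDerivAt, fun j => by
    simp [PiLp.single_apply]⟩

variable [Fintype ι]

namespace HasPartialsAt

theorem fderiv_single (h : HasPartialsAt f g x) (j : ι) :
    fderiv ℝ f x (EuclideanSpace.single j 1) = g j := by
  obtain ⟨L, hL, hg⟩ := h
  rw [hL.fderiv, hg]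

theorem add (h₁ : HasPartialsAt f₁ g₁ x) (h₂ : HasPartialsAt f₂ g₂ x) :
    HasPartialsAt (fun y => f₁ y + f₂ y) (fun j => g₁ j + g₂ j) x := by
  obtain ⟨L₁, hL₁, hg₁⟩ := h₁; obtain ⟨L₂, hL₂, hg₂⟩ := h₂
  exact ⟨L₁ + L₂, hL₁.add hL₂, fun j => by simp [hg₁, hg₂]⟩

theorem sub (h₁ : HasPartialsAt f₁ g₁ x) (h₂ : HasPartialsAt f₂ g₂ x) :
    HasPartialsAt (fun y => f₁ y - f₂ y) (fun j => g₁ j - g₂ j) x := by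
  obtain ⟨L₁, hL₁, hg₁⟩ := h₁; obtain ⟨L₂, hL₂, hg₂⟩ := h₂
  exact ⟨L₁ - L₂, hL₁.sub hL₂, fun j => by simp [hg₁, hg₂]⟩

theorem mul (h₁ : HasPartialsAt f₁ g₁ x) (h₂ : HasPartialsAt f₂ g₂ x) :
    HasPartialsAt (fun y => f₁ y * f₂ y) (fun j => f₁ x * g₂ j + f₂ x * g₁ j) x := by
  obtain ⟨L₁, hL₁, hg₁⟩ := h₁; obtain ⟨L₂, hL₂, hg₂⟩ := h₂
  exact ⟨f₁ x • L₂ + f₂ x • L₁, hL₁.mul hL₂, fun j => by simp [hg₁, hg₂]⟩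

theorem const_mul (c : ℝ) (h : HasPartialsAt f g x) :
    HasPartialsAt (fun y => c * f y) (fun j => c * g j) x := by
  obtain ⟨L, hL, hg⟩ := h
  exact ⟨c • L, hL.const_mul c, fun j => by simp [hg]⟩

theorem inv (h : HasPartialsAt f g x) (hx : f x ≠ 0) :
    HasPartialsAt (fun y => (f y)⁻¹) (fun j => -g j / f x ^ 2) x := by
  obtain ⟨L, hL, hg⟩ := h
  exact ⟨(-(f x ^ 2)⁻¹) • L, (hasDerivAt_inv hx).comp_hasFDerivAt x hL, fun j => by
    simp [hg, div_eq_inv_mul]⟩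

theorem div (h₁ : HasPartialsAt f₁ g₁ x) (h₂ : HasPartialsAt f₂ g₂ x) (hx : f₂ x ≠ 0) :
    HasPartialsAt (fun y => f₁ y / f₂ y) (fun j => (g₁ j * f₂ x - f₁ x * g₂ j) / f₂ x ^ 2) x := by
  convert h₁.mul (h₂.inv hx) using 2 with j
  · exact div_eq_mul_inv _ _
  · field_simp
    ring

theorem pow (h : HasPartialsAt f g x) (n : ℕ) :
    HasPartialsAt (fun y => f y ^ n) (fun j => n * f x ^ (n - 1) * g j) x := by
  obtain ⟨L, hL, hg⟩ := h
  exact ⟨(n * f x ^ (n - 1)) • L, (hasDerivAt_pow n (f x)).comp_hasFDerivAt x hL,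
    fun j => by simp [hg]⟩

theorem sum {κ : Type*} {s : Finset κ} {f : κ → EuclideanSpace ℝ ι → ℝ} {g : κ → ι → ℝ}
    (h : ∀ a ∈ s, HasPartialsAt (f a) (g a) x) :
    HasPartialsAt (fun y => ∑ a ∈ s, f a y) (fun j => ∑ a ∈ s, g a j) x := by
  refine ⟨∑ a ∈ s, fderiv ℝ (f a) x,
    HasFDerivAt.fun_sum fun a ha => (h a ha).differentiableAt.hasFDerivAt, fun j => ?_⟩
  rw [FunLike.coe_sum, Finset.sum_apply]
  exact Finset.sum_congr rfl fun a ha => (h a ha).fderiv_single j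

end HasPartialsAt

theorem hasPartialsAt_norm (hx : x ≠ 0) : HasPartialsAt (‖·‖) (fun j => x j / ‖x‖) x := by
  have hsq : HasFDerivAt (fun y : EuclideanSpace ℝ ι => ‖y‖ ^ 2) (2 • innerSL ℝ x) x :=
    (hasStrictFDerivAt_norm_sq x).hasFDerivAt
  refine ⟨_, (hsq.sqrt (by positivity)).congr_of_eventuallyEq
    (.of_forall fun y => (Real.sqrt_sq (norm_nonneg y)).symm), fun j => ?_⟩
  simp only [Real.sqrt_sq (norm_nonneg x), one_div, mul_inv_rev, smul_apply, coe_innerSL_apply,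
    EuclideanSpace.inner_single_right, ringHom_apply, one_mul, nsmul_eq_mul, Nat.cast_ofNat,
    smul_eq_mul]
  field_simp

theorem HasPartialsAt.div_norm_pow (h : HasPartialsAt f g x) (hx : x ≠ 0) (n : ℕ) :
    HasPartialsAt (fun y => f y / ‖y‖ ^ n)
      (fun j => g j / ‖x‖ ^ n - n * f x * x j / ‖x‖ ^ (n + 2)) x := by
  have hx' : ‖x‖ ≠ 0 := norm_ne_zero_iff.2 hx
  convert h.div ((hasPartialsAt_norm hx).pow n) (pow_ne_zero n hx') using 2 with j
  rcases n with _ | n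
  · simp
  · simp only [Nat.add_sub_cancel, Nat.cast_add, Nat.cast_one]
    field_simp
    ring

end Partials

section Laplacian

variable {ι : Type*} [Fintype ι] [DecidableEq ι] {f f₁ f₂ : EuclideanSpace ℝ ι → ℝ}
  {G G₁ G₂ : EuclideanSpace ℝ ι → ι → ℝ} {l l₁ l₂ : ℝ} {x : EuclideanSpace ℝ ι}

def HasLaplacianAt (f : EuclideanSpace ℝ ι → ℝ) (G : EuclideanSpace ℝ ι → ι → ℝ) (l : ℝ)
    (x : EuclideanSpace ℝ ι) : Prop :=
  (∀ᶠ y in 𝓝 x, HasPartialsAt f (G y) y) ∧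
    ∃ H : ι → ι → ℝ, (∀ j, HasPartialsAt (fun y => G y j) (H j) x) ∧ ∑ j, H j j = l

namespace HasLaplacianAt

theorem hasPartialsAt (h : HasLaplacianAt f G l x) : HasPartialsAt f (G x) x :=
  h.1.self_of_nhds

theorem sum_fderiv_fderiv_single (h : HasLaplacianAt f G l x) :
    ∑ j, fderiv ℝ (fun y => fderiv ℝ f y (EuclideanSpace.single j 1)) x
      (EuclideanSpace.single j 1) = l := by
  obtain ⟨hG, H, hH, rfl⟩ := h
  refine Finset.sum_congr rfl fun j _ => ?_
  have hGj : (fun y => fderiv ℝ f y (EuclideanSpace.single j 1)) =ᶠ[𝓝 x] fun y => G y j :=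
    hG.mono fun y hy => hy.fderiv_single j
  rw [hGj.fderiv_eq, (hH j).fderiv_single]

theorem add (h₁ : HasLaplacianAt f₁ G₁ l₁ x) (h₂ : HasLaplacianAt f₂ G₂ l₂ x) :
    HasLaplacianAt (fun y => f₁ y + f₂ y) (fun y j => G₁ y j + G₂ y j) (l₁ + l₂) x := by
  obtain ⟨hG₁, H₁, hH₁, rfl⟩ := h₁; obtain ⟨hG₂, H₂, hH₂, rfl⟩ := h₂
  exact ⟨by filter_upwards [hG₁, hG₂] with y hy₁ hy₂ using hy₁.add hy₂,
    fun j k => H₁ j k + H₂ j k, fun j => (hH₁ j).add (hH₂ j), Finset.sum_add_distrib⟩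

theorem sub (h₁ : HasLaplacianAt f₁ G₁ l₁ x) (h₂ : HasLaplacianAt f₂ G₂ l₂ x) :
    HasLaplacianAt (fun y => f₁ y - f₂ y) (fun y j => G₁ y j - G₂ y j) (l₁ - l₂) x := by
  obtain ⟨hG₁, H₁, hH₁, rfl⟩ := h₁; obtain ⟨hG₂, H₂, hH₂, rfl⟩ := h₂
  exact ⟨by filter_upwards [hG₁, hG₂] with y hy₁ hy₂ using hy₁.sub hy₂,
    fun j k => H₁ j k - H₂ j k, fun j => (hH₁ j).sub (hH₂ j), Finset.sum_sub_distrib _ _⟩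

theorem const_mul (c : ℝ) (h : HasLaplacianAt f G l x) :
    HasLaplacianAt (fun y => c * f y) (fun y j => c * G y j) (c * l) x := by
  obtain ⟨hG, H, hH, rfl⟩ := h
  exact ⟨hG.mono fun y hy => hy.const_mul c, fun j k => c * H j k,
    fun j => (hH j).const_mul c, Finset.mul_sum ..|>.symm⟩

theorem mul (h₁ : HasLaplacianAt f₁ G₁ l₁ x) (h₂ : HasLaplacianAt f₂ G₂ l₂ x) :
    HasLaplacianAt (fun y => f₁ y * f₂ y) (fun y j => f₁ y * G₂ y j + f₂ y * G₁ y j)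
      (f₁ x * l₂ + 2 * ∑ j, G₁ x j * G₂ x j + f₂ x * l₁) x := by
  have hf₁ := h₁.hasPartialsAt; have hf₂ := h₂.hasPartialsAt
  obtain ⟨hG₁, H₁, hH₁, rfl⟩ := h₁; obtain ⟨hG₂, H₂, hH₂, rfl⟩ := h₂
  refine ⟨by filter_upwards [hG₁, hG₂] with y hy₁ hy₂ using hy₁.mul hy₂, _,
    fun j => (hf₁.mul (hH₂ j)).add (hf₂.mul (hH₁ j)), ?_⟩
  simp only [Finset.mul_sum, ← Finset.sum_add_distrib]
  exact Finset.sum_congr rfl fun j _ => by ring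

end HasLaplacianAt

theorem hasLaplacianAt_apply (i : ι) (x : EuclideanSpace ℝ ι) :
    HasLaplacianAt (fun y => y i) (fun _ j => if i = j then 1 else 0) 0 x :=
  ⟨.of_forall fun y => hasPartialsAt_apply i y, fun _ _ => 0,
    fun _ => hasPartialsAt_const _ x, Finset.sum_const_zero⟩

theorem hasLaplacianAt_one_div_norm_pow (hx : x ≠ 0) (n : ℕ) :
    HasLaplacianAt (fun y => 1 / ‖y‖ ^ n) (fun y j => -n * y j / ‖y‖ ^ (n + 2))
      (n * (n + 2 - Fintype.card ι) / ‖x‖ ^ (n + 2)) x := by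
  have hx' : ‖x‖ ≠ 0 := norm_ne_zero_iff.2 hx
  refine ⟨?_, _, fun j => ((hasPartialsAt_apply j x).const_mul (-n)).div_norm_pow hx (n + 2), ?_⟩
  · filter_upwards [isOpen_ne.mem_nhds hx] with y hy
    convert (hasPartialsAt_const 1 y).div_norm_pow hy n using 2 with j
    ring
  · calc ∑ j, _ = ∑ j, (-n / ‖x‖ ^ (n + 2) + n * (n + 2) / ‖x‖ ^ (n + 4) * x j ^ 2) :=
          Finset.sum_congr rfl fun j _ => by simp only [if_true]; push_cast; ring
      _ = _ := by
        rw [Finset.sum_add_distrib, ← Finset.mul_sum, ← EuclideanSpace.real_norm_sq_eq]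
        simp only [Finset.sum_const, Finset.card_univ, nsmul_eq_mul]
        field_simp
        ring

theorem HasLaplacianAt.div_norm_pow (h : HasLaplacianAt f G l x) (hx : x ≠ 0) {m : ℝ}
    (hG : ∑ j, x j * G x j = m * f x) (n : ℕ) :
    HasLaplacianAt (fun y => f y / ‖y‖ ^ n)
      (fun y j => G y j / ‖y‖ ^ n - n * f y * y j / ‖y‖ ^ (n + 2))
      (l / ‖x‖ ^ n + n * (n + 2 - Fintype.card ι - 2 * m) * f x / ‖x‖ ^ (n + 2)) x := by
  have hx' : ‖x‖ ≠ 0 := norm_ne_zero_iff.2 hx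
  convert h.mul (hasLaplacianAt_one_div_norm_pow hx n) using 1
  · ext y; ring
  · ext y j; ring
  · have hsum : ∑ j, G x j * (-n * x j / ‖x‖ ^ (n + 2)) = -n * (m * f x) / ‖x‖ ^ (n + 2) := by
      rw [← hG, Finset.mul_sum, Finset.sum_div]
      exact Finset.sum_congr rfl fun j _ => by ring
    rw [hsum]
    field_simp
    ring

end Laplacian

section Divergence

variable {ι : Type*} [Fintype ι] [DecidableEq ι] {u u₁ u₂ : EuclideanSpace ℝ ι → ι → ℝ}
  {d d₁ d₂ : ℝ} {x : EuclideanSpace ℝ ι}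

def HasDivergenceAt (u : EuclideanSpace ℝ ι → ι → ℝ) (d : ℝ) (x : EuclideanSpace ℝ ι) : Prop :=
  ∃ g : ι → ι → ℝ, (∀ i, HasPartialsAt (fun y => u y i) (g i) x) ∧ ∑ i, g i i = d

namespace HasDivergenceAt

theorem add (h₁ : HasDivergenceAt u₁ d₁ x) (h₂ : HasDivergenceAt u₂ d₂ x) :
    HasDivergenceAt (fun y i => u₁ y i + u₂ y i) (d₁ + d₂) x := by
  obtain ⟨g₁, hg₁, rfl⟩ := h₁; obtain ⟨g₂, hg₂, rfl⟩ := h₂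
  exact ⟨fun i j => g₁ i j + g₂ i j, fun i => (hg₁ i).add (hg₂ i), Finset.sum_add_distrib⟩

theorem sub (h₁ : HasDivergenceAt u₁ d₁ x) (h₂ : HasDivergenceAt u₂ d₂ x) :
    HasDivergenceAt (fun y i => u₁ y i - u₂ y i) (d₁ - d₂) x := by
  obtain ⟨g₁, hg₁, rfl⟩ := h₁; obtain ⟨g₂, hg₂, rfl⟩ := h₂
  exact ⟨fun i j => g₁ i j - g₂ i j, fun i => (hg₁ i).sub (hg₂ i), Finset.sum_sub_distrib _ _⟩

theorem const_mul (c : ℝ) (h : HasDivergenceAt u d x) :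
    HasDivergenceAt (fun y i => c * u y i) (c * d) x := by
  obtain ⟨g, hg, rfl⟩ := h
  exact ⟨fun i j => c * g i j, fun i => (hg i).const_mul c, (Finset.mul_sum ..).symm⟩

theorem div_norm_pow (h : HasDivergenceAt u d x) (hx : x ≠ 0) {a : ℝ}
    (hu : ∑ i, x i * u x i = a) (n : ℕ) :
    HasDivergenceAt (fun y i => u y i / ‖y‖ ^ n) (d / ‖x‖ ^ n - n * a / ‖x‖ ^ (n + 2)) x := by
  obtain ⟨g, hg, rfl⟩ := h
  refine ⟨_, fun i => (hg i).div_norm_pow hx n, ?_⟩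
  rw [Finset.sum_sub_distrib, Finset.sum_div, ← hu, Finset.mul_sum, Finset.sum_div]
  exact congrArg _ (Finset.sum_congr rfl fun i _ => by ring)

end HasDivergenceAt

end Divergence

theorem fderiv_pi_apply {E ι : Type*} [NormedAddCommGroup E] [NormedSpace ℝ E] [Fintype ι]
    {u : E → ι → ℝ} {y : E} (hu : ∀ i, DifferentiableAt ℝ (fun z => u z i) y) (v : E) (i : ι) :
    fderiv ℝ u y v i = fderiv ℝ (fun z => u z i) y v := by
  rw [fderiv_apply (differentiableAt_pi.2 hu) i]
  rfl

section Stokes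

variable {S : Matrix (Fin 3) (Fin 3) ℝ} {x : E3}

theorem quadForm_eq_sum_mul_mulVec3 (S : Matrix (Fin 3) (Fin 3) ℝ) (x : E3) :
    quadForm S x = ∑ j, x j * mulVec3 S x j := by
  simp only [quadForm, mulVec3, Finset.mul_sum, mul_assoc]

theorem hasPartialsAt_mulVec3 (S : Matrix (Fin 3) (Fin 3) ℝ) (i : Fin 3) (x : E3) :
    HasPartialsAt (fun y => mulVec3 S y i) (fun j => S i j) x := by
  convert HasPartialsAt.sum fun k (_ : k ∈ Finset.univ) =>
    (hasPartialsAt_apply k x).const_mul (S i k) using 2 with _ j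
  · rfl
  · simp

theorem hasPartialsAt_quadForm (hS : S.IsSymm) (x : E3) :
    HasPartialsAt (quadForm S) (fun j => 2 * mulVec3 S x j) x := by
  convert HasPartialsAt.sum fun k (_ : k ∈ Finset.univ) =>
    (hasPartialsAt_apply k x).mul (hasPartialsAt_mulVec3 S k x) using 1
  · exact funext (quadForm_eq_sum_mul_mulVec3 S)
  · ext j
    simp only [Finset.sum_add_distrib, mul_ite, mul_one, mul_zero, Finset.sum_ite_eq',
      Finset.mem_univ, if_true, two_mul, mulVec3]
    congr 1
    exact Finset.sum_congr rfl fun k _ => by rw [← hS.apply j k]; ring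

theorem hasLaplacianAt_mulVec3 (S : Matrix (Fin 3) (Fin 3) ℝ) (i : Fin 3) (x : E3) :
    HasLaplacianAt (fun y => mulVec3 S y i) (fun _ j => S i j) 0 x :=
  ⟨.of_forall fun y => hasPartialsAt_mulVec3 S i y, fun _ _ => 0,
    fun _ => hasPartialsAt_const _ x, Finset.sum_const_zero⟩

theorem hasLaplacianAt_quadForm (hS : S.IsSymm) (x : E3) :
    HasLaplacianAt (quadForm S) (fun y j => 2 * mulVec3 S y j) (2 * S.trace) x :=
  ⟨.of_forall fun y => hasPartialsAt_quadForm hS y, _,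
    fun j => (hasPartialsAt_mulVec3 S j x).const_mul 2, by simp [Matrix.trace, Finset.mul_sum]⟩

theorem hasLaplacianAt_quadForm_mul_apply (hS : S.IsSymm) (hStr : S.trace = 0) (x : E3)
    (i : Fin 3) :
    HasLaplacianAt (fun y => quadForm S y * y i)
      (fun y j => quadForm S y * (if i = j then 1 else 0) + y i * (2 * mulVec3 S y j))
      (4 * mulVec3 S x i) x := by
  convert (hasLaplacianAt_quadForm hS x).mul (hasLaplacianAt_apply i x) using 1
  simp only [mul_zero, mul_ite, mul_one, Finset.sum_ite_eq, Finset.mem_univ, ↓reduceIte,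
    zero_add, hStr, add_zero]
  ring

theorem hasDivergenceAt_mulVec3 (S : Matrix (Fin 3) (Fin 3) ℝ) (x : E3) :
    HasDivergenceAt (fun y i => mulVec3 S y i) S.trace x :=
  ⟨_, fun i => hasPartialsAt_mulVec3 S i x, rfl⟩

theorem hasDivergenceAt_quadForm_mul_apply (hS : S.IsSymm) (x : E3) :
    HasDivergenceAt (fun y i => quadForm S y * y i) (5 * quadForm S x) x := by
  refine ⟨_, fun i => (hasPartialsAt_quadForm hS x).mul (hasPartialsAt_apply i x), ?_⟩
  have hsum : ∑ i, x i * (2 * mulVec3 S x i) = 2 * quadForm S x := by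
    rw [quadForm_eq_sum_mul_mulVec3, Finset.mul_sum]
    exact Finset.sum_congr rfl fun i _ => by ring
  simp only [if_true, mul_one, Finset.sum_add_distrib, hsum, Finset.sum_const,
    Finset.card_univ, Fintype.card_fin, nsmul_eq_mul]
  ring

theorem HasDivergenceAt.divg_eq {u : E3 → Fin 3 → ℝ} {d : ℝ} (h : HasDivergenceAt u d x) :
    divg u x = d := by
  obtain ⟨g, hg, rfl⟩ := h
  refine Finset.sum_congr rfl fun i _ => ?_
  rw [fderiv_pi_apply fun k => (hg k).differentiableAt]
  exact (hg i).fderiv_single i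

theorem vecLap_eq_of_hasLaplacianAt {u : E3 → Fin 3 → ℝ} {G : Fin 3 → E3 → Fin 3 → ℝ}
    {l : Fin 3 → ℝ} (h : ∀ i, HasLaplacianAt (fun y => u y i) (G i) (l i) x) (i : Fin 3) :
    vecLap u x i = l i := by
  have hdiff : ∀ᶠ y in 𝓝 x, ∀ k, DifferentiableAt ℝ (fun z => u z k) y :=
    eventually_all.2 fun k => (h k).1.mono fun y hy => hy.differentiableAt
  rw [← (h i).sum_fderiv_fderiv_single]
  refine Finset.sum_congr rfl fun j _ => ?_
  have hj : (fun y => fderiv ℝ u y (e3 j) i) =ᶠ[𝓝 x]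
      fun y => fderiv ℝ (fun z => u z i) y (e3 j) :=
    hdiff.mono fun y hy => fderiv_pi_apply hy (e3 j) i
  rw [hj.fderiv_eq]
  rfl

theorem Phi0_apply_eq (S : Matrix (Fin 3) (Fin 3) ℝ) (y : E3) (i : Fin 3) :
    Phi0 S y i = -(5 / 2) * (quadForm S y * y i / ‖y‖ ^ 5) - mulVec3 S y i / ‖y‖ ^ 5
      + 5 / 2 * (quadForm S y * y i / ‖y‖ ^ 7) := by
  unfold Phi0
  ring

theorem hasLaplacianAt_Phi0 (hS : S.IsSymm) (hStr : S.trace = 0) (hx : x ≠ 0) (i : Fin 3) :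
    ∃ G, HasLaplacianAt (fun y => Phi0 S y i) G
      (-10 * mulVec3 S x i / ‖x‖ ^ 5 + 25 * quadForm S x * x i / ‖x‖ ^ 7) x := by
  have hq := hasLaplacianAt_quadForm_mul_apply hS hStr x i
  have hq_euler :
      ∑ j, x j * (quadForm S x * (if i = j then 1 else 0) + x i * (2 * mulVec3 S x j))
        = 3 * (quadForm S x * x i) := by
    have hsum : ∑ j, x j * (x i * (2 * mulVec3 S x j)) = 2 * x i * quadForm S x := by
      rw [quadForm_eq_sum_mul_mulVec3, Finset.mul_sum]
      exact Finset.sum_congr rfl fun j _ => by ring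
    simp only [mul_add, Finset.sum_add_distrib, hsum, mul_ite, mul_one, mul_zero,
      Finset.sum_ite_eq, Finset.mem_univ, if_true]
    ring
  have hSx_euler : ∑ j, x j * S i j = 1 * mulVec3 S x i := by
    simp only [one_mul, mulVec3, mul_comm]
  exact ⟨_, by
    convert (((hq.div_norm_pow hx hq_euler 5).const_mul (-(5 / 2))).sub
      ((hasLaplacianAt_mulVec3 S i x).div_norm_pow hx hSx_euler 5)).add
      ((hq.div_norm_pow hx hq_euler 7).const_mul (5 / 2)) using 1
    · exact funext fun y => Phi0_apply_eq S y i
    · have hx' : ‖x‖ ≠ 0 := norm_ne_zero_iff.2 hx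
      simp only [Fintype.card_fin]
      field_simp
      ring⟩

theorem hasDivergenceAt_Phi0 (hS : S.IsSymm) (hStr : S.trace = 0) (hx : x ≠ 0) :
    HasDivergenceAt (Phi0 S) 0 x := by
  have hq := hasDivergenceAt_quadForm_mul_apply hS x
  have hxq : ∑ i, x i * (quadForm S x * x i) = quadForm S x * ‖x‖ ^ 2 := by
    rw [EuclideanSpace.real_norm_sq_eq, Finset.mul_sum]
    exact Finset.sum_congr rfl fun i _ => by ring
  have hSx := hasDivergenceAt_mulVec3 S x
  have hxSx : ∑ i, x i * mulVec3 S x i = quadForm S x :=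
    (quadForm_eq_sum_mul_mulVec3 S x).symm
  convert (((hq.div_norm_pow hx hxq 5).const_mul (-(5 / 2))).sub
    (hSx.div_norm_pow hx hxSx 5)).add
    ((hq.div_norm_pow hx hxq 7).const_mul (5 / 2)) using 1
  · exact funext fun y => funext fun i => Phi0_apply_eq S y i
  · have hx' : ‖x‖ ≠ 0 := norm_ne_zero_iff.2 hx
    rw [hStr]
    field_simp
    ring

theorem hasPartialsAt_P0 (hS : S.IsSymm) (hx : x ≠ 0) :
    HasPartialsAt (P0 S)
      (fun j => -10 * mulVec3 S x j / ‖x‖ ^ 5 + 25 * quadForm S x * x j / ‖x‖ ^ 7) x := by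
  convert ((hasPartialsAt_quadForm hS x).div_norm_pow hx 5).const_mul (-5) using 1
  · ext y; unfold P0; ring
  · ext j; ring

end Stokes

/-- **(Φ₀, P₀) solves the homogeneous Stokes equations on ℝ³∖{0}**:
for every `x ≠ 0`, `ΔΦ₀(x) = ∇P₀(x)` componentwise and `div Φ₀(x) = 0`. -/
theorem Phi0_P0_solve_stokes (S : Matrix (Fin 3) (Fin 3) ℝ)
    (hSsym : S.IsSymm) (hStr : S.trace = 0) :
    ∀ x : E3, x ≠ 0 →
      (∀ i, vecLap (Phi0 S) x i = sgrad (P0 S) x i) ∧ divg (Phi0 S) x = 0 := by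
  intro x hx
  choose G hG using hasLaplacianAt_Phi0 hSsym hStr hx
  refine ⟨fun i => ?_, (hasDivergenceAt_Phi0 hSsym hStr hx).divg_eq⟩
  rw [vecLap_eq_of_hasLaplacianAt hG]
  exact ((hasPartialsAt_P0 hSsym hx).fderiv_single i).symm
end
end

section
/- Let S ∈ Sym₃,σ(ℝ) and define the matrix-valued function 𝓜(·)S on ℝ³∖{0} by 𝓜(x)S := D_x(−(5/2)(x·Sx)x/|x|⁵), the symmetric gradient of the degree −2 homogeneous part of Φ₀; it is homogeneous of degree −3. Then for all 0 < t < t' < ∞, ∫_{t < |x| < t'} 𝓜(x)S dx = 0 (entrywise). -/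
/-
Expanding the quadratic form, `homPart S = -(5/2) ∑ₖₗ Sₖₗ xₖxₗxᵢ/|x|⁵`, and
`∂ⱼ(xₖxₗxᵢ/|x|⁵) = P(x)/|x|⁷` for a quartic polynomial `P`. Since the annulus is invariant under
orthogonal maps, the moments `∫ xₐx_bx_cx_d |x|⁻⁷` form an isotropic tensor `m (δδ + δδ + δδ)`:
sign changes of a coordinate kill the odd moments, permutations of coordinates identify the even
ones, and the reflection in the line through `(2, 1, 0)` gives `∫ x₀⁴ = 3 ∫ x₀²x₁²`. Every such `P`
integrates to zero against this tensor.
-/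

noncomputable section
open MeasureTheory Metric Real Filter

/-- The degree `-2` homogeneous part of `Φ₀`: `x ↦ -(5/2)(x·Sx)x/|x|⁵`. -/
def homPart (S : Matrix (Fin 3) (Fin 3) ℝ) (x : E3) (i : Fin 3) : ℝ :=
  -(5/2) * quadForm S x * x i / ‖x‖^5

theorem multiset_prod_map_neg_at {ι : Type*} [DecidableEq ι] (v : ι) (f : ι → ℝ)
    (s : Multiset ι) :
    (s.map fun i => if i = v then -f i else f i).prod = (-1) ^ s.count v * (s.map f).prod := by
  induction s using Multiset.induction_on with
  | empty => simp
  | cons a s ih =>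
    by_cases h : a = v
    · subst h
      simp only [Multiset.map_cons, Multiset.prod_cons, ↓reduceIte, ih, Multiset.count_cons_self,
        pow_succ]
      ring
    · simp only [Multiset.map_cons, Multiset.prod_cons, if_neg h, ih,
        Multiset.count_cons_of_ne (Ne.symm h)]; ring

theorem hasFDerivAt_inv_norm_pow {F : Type*} [NormedAddCommGroup F] [InnerProductSpace ℝ F]
    {x : F} (hx : x ≠ 0) (n : ℕ) :
    HasFDerivAt (fun y : F => (‖y‖ ^ n)⁻¹) ((-(n : ℝ) * (‖x‖ ^ (n + 2))⁻¹) • innerSL ℝ x) x := by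
  have hpow : ∀ (m : ℕ) (y : F), (‖y‖ ^ 2) ^ (-(m : ℝ) / 2) = (‖y‖ ^ m)⁻¹ := fun m y => by
    rw [← Real.rpow_natCast_mul (norm_nonneg y), ← Real.rpow_natCast,
      ← Real.rpow_neg (norm_nonneg y)]
    congr 1; push_cast; ring
  have h := (hasStrictFDerivAt_norm_sq x).hasFDerivAt.rpow_const (p := -(n : ℝ) / 2)
    (Or.inl (by positivity))
  simp only [hpow] at h
  convert h using 1
  rw [← Nat.cast_smul_eq_nsmul ℝ, smul_smul, show -(n : ℝ) / 2 - 1 = -((n + 2 : ℕ) : ℝ) / 2 by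
    push_cast; ring, hpow]
  congr 1; push_cast; ring

def cubicKernel (k l i : Fin 3) (x : E3) : ℝ := x k * x l * x i / ‖x‖ ^ 5

def cubicKernelGradNumerator (k l i j : Fin 3) (x : E3) : ℝ :=
  ((if k = j then 1 else 0) * (x l * x i) + (if l = j then 1 else 0) * (x k * x i) +
    (if i = j then 1 else 0) * (x k * x l)) * ‖x‖ ^ 2 - 5 * (x k * x l * x i * x j)

theorem differentiableAt_cubicKernel {x : E3} (hx : x ≠ 0) (k l i : Fin 3) :
    DifferentiableAt ℝ (cubicKernel k l i) x := by
  have hp : ∀ m, DifferentiableAt ℝ (fun y : E3 => y m) x :=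
    fun m => (EuclideanSpace.proj (𝕜 := ℝ) m).differentiableAt
  have hn : DifferentiableAt ℝ (fun y : E3 => ‖y‖) x := differentiableAt_id.norm ℝ hx
  unfold cubicKernel
  fun_prop (disch := exact pow_ne_zero _ (norm_ne_zero_iff.mpr hx))

theorem fderiv_cubicKernel_apply {x : E3} (hx : x ≠ 0) (k l i j : Fin 3) :
    fderiv ℝ (cubicKernel k l i) x (e3 j) = cubicKernelGradNumerator k l i j x / ‖x‖ ^ 7 := by
  have hc : ∀ m, HasFDerivAt (fun y : E3 => y m) (EuclideanSpace.proj m : E3 →L[ℝ] ℝ) x :=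
    fun m => (EuclideanSpace.proj (𝕜 := ℝ) m).hasFDerivAt
  have h := (((hc k).fun_mul (hc l)).fun_mul (hc i)).fun_mul (hasFDerivAt_inv_norm_pow hx 5)
  have hfun : (fun y : E3 => y k * y l * y i * (‖y‖ ^ 5)⁻¹) = cubicKernel k l i := by
    funext y; rw [cubicKernel, div_eq_mul_inv]
  rw [hfun] at h
  rw [h.fderiv]
  have hn : ‖x‖ ≠ 0 := norm_ne_zero_iff.mpr hx
  simp only [e3, cubicKernelGradNumerator, add_apply,
    smul_apply, coe_innerSL_apply, EuclideanSpace.inner_single_right,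
    PiLp.proj_apply, PiLp.single_apply, smul_eq_mul, ringHom_apply, mul_ite, mul_one, mul_zero,
    ite_mul, one_mul, zero_mul]
  split_ifs <;> field_simp <;> ring

theorem continuous_cubicKernelGradNumerator (k l i j : Fin 3) :
    Continuous (cubicKernelGradNumerator k l i j) := by
  have hc : ∀ m, Continuous fun x : E3 => x m :=
    fun m => (EuclideanSpace.proj (𝕜 := ℝ) m).continuous
  unfold cubicKernelGradNumerator
  fun_prop

theorem homPart_eq_sum_cubicKernel (S : Matrix (Fin 3) (Fin 3) ℝ) (x : E3) (a : Fin 3) :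
    homPart S x a = -(5 / 2) * ∑ k, ∑ l, S k l * cubicKernel k l a x := by
  simp only [homPart, quadForm, cubicKernel, Finset.mul_sum, Finset.sum_div, Finset.sum_mul]
  congr 1; ext k; congr 1; ext l; ring

theorem fderiv_homPart_apply (S : Matrix (Fin 3) (Fin 3) ℝ) {x : E3} (hx : x ≠ 0) (a b : Fin 3) :
    fderiv ℝ (homPart S) x (e3 b) a =
      -(5 / 2) * ∑ k, ∑ l, S k l * (cubicKernelGradNumerator k l a b x / ‖x‖ ^ 7) := by
  have hcomp : ∀ a, HasFDerivAt (fun y => homPart S y a)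
      ((-(5 / 2) : ℝ) • ∑ k, ∑ l, S k l • fderiv ℝ (cubicKernel k l a) x) x := fun a => by
    simp only [homPart_eq_sum_cubicKernel]
    exact (HasFDerivAt.fun_sum fun k _ => HasFDerivAt.fun_sum fun l _ =>
      ((differentiableAt_cubicKernel hx k l a).hasFDerivAt.const_mul (S k l))).const_mul _
  rw [(hasFDerivAt_pi.2 hcomp).fderiv]
  simp [fderiv_cubicKernel_apply hx]

section Moments
variable {ι : Type*} [Fintype ι]

def radialMoment (μ : Measure (EuclideanSpace ℝ ι)) (g : ℝ → ℝ) (s : Multiset ι) : ℝ :=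
  ∫ x, (s.map x).prod * g ‖x‖ ∂μ

variable {μ : Measure (EuclideanSpace ℝ ι)}
  (hμ : ∀ T : EuclideanSpace ℝ ι ≃ₗᵢ[ℝ] EuclideanSpace ℝ ι, MeasurePreserving T μ μ) (g : ℝ → ℝ)

theorem integral_prod_mul_eq_radialMoment (s : Multiset ι) :
    ∫ x, (s.map fun i => x i).prod * g ‖x‖ ∂μ = radialMoment μ g s := rfl

include hμ

theorem radialMoment_eq_of_isometry (T : EuclideanSpace ℝ ι ≃ₗᵢ[ℝ] EuclideanSpace ℝ ι)
    (s : Multiset ι) (F : EuclideanSpace ℝ ι → ℝ) (hF : ∀ x, (s.map (T x)).prod = F x) :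
    radialMoment μ g s = ∫ x, F x * g ‖x‖ ∂μ := by
  rw [radialMoment, ← (hμ T).integral_comp T.toHomeomorph.measurableEmbedding]
  simp [hF, T.norm_map]

theorem radialMoment_map_perm (σ : Equiv.Perm ι) (s : Multiset ι) :
    radialMoment μ g (s.map σ) = radialMoment μ g s := by
  refine (radialMoment_eq_of_isometry hμ g (LinearIsometryEquiv.piLpCongrLeft 2 ℝ ℝ σ.symm) _ _
    fun x => ?_).symm
  simp [Multiset.map_map]

theorem radialMoment_eq_of_eq_map (σ : Equiv.Perm ι) {s t : Multiset ι} (h : s = t.map σ) :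
    radialMoment μ g s = radialMoment μ g t := by
  rw [h, radialMoment_map_perm hμ g]

theorem radialMoment_eq_zero_of_odd_count [DecidableEq ι] {s : Multiset ι} {v : ι}
    (hv : Odd (s.count v)) : radialMoment μ g s = 0 := by
  let T := LinearIsometryEquiv.piLpCongrRight 2 fun i : ι =>
    if i = v then LinearIsometryEquiv.neg ℝ (E := ℝ) else LinearIsometryEquiv.refl ℝ ℝ
  have h := radialMoment_eq_of_isometry hμ g T s (fun x => -(s.map x).prod) fun x => by
    have hT : ∀ i, T x i = if i = v then -x i else x i := fun i => by
      simp only [T, LinearIsometryEquiv.piLpCongrRight_apply, PiLp.toLp_apply]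
      split_ifs <;> rfl
    simp only [hT]
    rw [multiset_prod_map_neg_at, hv.neg_one_pow, neg_one_mul]
  simp only [neg_mul, integral_neg] at h
  rw [radialMoment] at h ⊢
  linarith
end Moments

theorem reflection_span_two_one_zero_apply_zero (x : E3) :
    ((ℝ ∙ (!₂[2, 1, 0] : E3)).reflection x) 0 = (3 * x 0 + 4 * x 1) / 5 := by
  have hnorm : ‖(!₂[2, 1, 0] : E3)‖ ^ 2 = 5 := by
    norm_num [EuclideanSpace.real_norm_sq_eq, Fin.sum_univ_three, Matrix.cons_val_two, Matrix.tail_cons, Matrix.head_cons]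
  have hinner : inner ℝ (!₂[2, 1, 0] : E3) x = 2 * x 0 + x 1 := by
    simp [EuclideanSpace.inner_eq_star_dotProduct, dotProduct, Fin.sum_univ_three, mul_comm]
  rw [Submodule.reflection_singleton_apply, hinner]
  norm_num [hnorm]
  ring

section QuarticMoments
variable {μ : Measure E3} (hμ : ∀ T : E3 ≃ₗᵢ[ℝ] E3, MeasurePreserving T μ μ) {g : ℝ → ℝ}
  (hg : ∀ s : Multiset (Fin 3), Multiset.card s = 4 →
    Integrable (fun x : E3 => (s.map x).prod * g ‖x‖) μ)
include hμ hg

theorem radialMoment_four_zero_eq :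
    radialMoment μ g {0, 0, 0, 0} = 3 * radialMoment μ g {0, 0, 1, 1} := by
  -- the reflection turns `x₀⁴` into `((3x₀ + 4x₁)/5)⁴`; expand and compare the moments
  let Q (s : Multiset (Fin 3)) (x : E3) : ℝ := (s.map x).prod * g ‖x‖
  have hI : ∀ s : Multiset (Fin 3), Multiset.card s = 4 → ∀ c : ℝ,
      Integrable (fun x => c * Q s x) μ := fun s hs c => (hg s hs).const_mul c
  have hexp : ∀ x : E3, ((3 * x 0 + 4 * x 1) / 5) ^ 4 * g ‖x‖ =
      81 / 625 * Q {0, 0, 0, 0} x + (432 / 625 * Q {0, 0, 0, 1} x + (864 / 625 * Q {0, 0, 1, 1} x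
        + (768 / 625 * Q {0, 1, 1, 1} x + 256 / 625 * Q {1, 1, 1, 1} x))) := fun x => by
    simp only [Q, Multiset.insert_eq_cons, Multiset.map_cons, Multiset.prod_cons,
      Multiset.map_singleton, Multiset.prod_singleton]
    ring
  have h := radialMoment_eq_of_isometry hμ g (ℝ ∙ (!₂[2, 1, 0] : E3)).reflection {0, 0, 0, 0}
    (fun x => ((3 * x 0 + 4 * x 1) / 5) ^ 4) fun x => by
      simp only [Multiset.insert_eq_cons, Multiset.map_cons, Multiset.map_singleton,
        Multiset.prod_cons, Multiset.prod_singleton, reflection_span_two_one_zero_apply_zero]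
      ring
  simp only [hexp] at h
  rw [integral_add (hI _ rfl _) (by fun_prop (disch := rfl)),
    integral_add (hI _ rfl _) (by fun_prop (disch := rfl)),
    integral_add (hI _ rfl _) (by fun_prop (disch := rfl)),
    integral_add (hI _ rfl _) (hI _ rfl _)] at h
  have hM : ∀ s, ∫ x, Q s x ∂μ = radialMoment μ g s := fun _ => rfl
  simp only [integral_const_mul, hM] at h
  have h0001 : radialMoment μ g {0, 0, 0, 1} = 0 :=
    radialMoment_eq_zero_of_odd_count hμ g (v := 1) (by decide)
  have h0111 : radialMoment μ g {0, 1, 1, 1} = 0 :=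
    radialMoment_eq_zero_of_odd_count hμ g (v := 0) (by decide)
  have h1111 : radialMoment μ g {1, 1, 1, 1} = radialMoment μ g {0, 0, 0, 0} :=
    radialMoment_map_perm hμ g (Equiv.swap 0 1) {0, 0, 0, 0}
  linarith

def isotropicFourTensor (a b c d : Fin 3) : ℝ :=
  (if a = b then 1 else 0) * (if c = d then 1 else 0) +
    (if a = c then 1 else 0) * (if b = d then 1 else 0) +
    (if a = d then 1 else 0) * (if b = c then 1 else 0)

omit hμ hg in
theorem sum_isotropicFourTensor_self (a b : Fin 3) :
    ∑ c, isotropicFourTensor a b c c = 5 * if a = b then 1 else 0 := by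
  fin_cases a <;> fin_cases b <;> norm_num [isotropicFourTensor, Fin.sum_univ_three, Fin.ext_iff]

theorem radialMoment_quartic (a b c d : Fin 3) :
    radialMoment μ g {a, b, c, d} = isotropicFourTensor a b c d * radialMoment μ g {0, 0, 1, 1} := by
  have h4 := radialMoment_four_zero_eq hμ hg
  -- each index pattern is odd in some coordinate or a permutation of `0011` or `0000`
  fin_cases a <;> fin_cases b <;> fin_cases c <;> fin_cases d <;>
    norm_num [isotropicFourTensor] <;>
    first
    | exact radialMoment_eq_zero_of_odd_count hμ g (v := 0) (by decide)
    | exact radialMoment_eq_zero_of_odd_count hμ g (v := 1) (by decide)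
    | exact radialMoment_eq_zero_of_odd_count hμ g (v := 2) (by decide)
    | exact radialMoment_eq_of_eq_map hμ g (Equiv.refl _) (by decide)
    | exact radialMoment_eq_of_eq_map hμ g (Equiv.swap 1 2) (by decide)
    | exact radialMoment_eq_of_eq_map hμ g (Equiv.swap 0 2) (by decide)
    | exact h4
    | exact (radialMoment_eq_of_eq_map hμ g (Equiv.swap 0 1) (by decide)).trans h4
    | exact (radialMoment_eq_of_eq_map hμ g (Equiv.swap 0 2) (by decide)).trans h4

theorem sum_radialMoment_trace (a b : Fin 3) :
    ∑ c, radialMoment μ g {a, b, c, c} =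
      5 * (if a = b then 1 else 0) * radialMoment μ g {0, 0, 1, 1} := by
  rw [Finset.sum_congr rfl fun c _ => radialMoment_quartic hμ hg a b c c, ← Finset.sum_mul,
    sum_isotropicFourTensor_self]

omit hμ hg in
theorem mul_mul_norm_sq_eq_sum (x : E3) (a b : Fin 3) :
    x a * x b * ‖x‖ ^ 2 * g ‖x‖ = ∑ c, (({a, b, c, c} : Multiset (Fin 3)).map x).prod * g ‖x‖ := by
  rw [EuclideanSpace.real_norm_sq_eq, Finset.mul_sum, Finset.sum_mul]
  congr 1; ext c
  simp only [Multiset.insert_eq_cons, Multiset.map_cons, Multiset.prod_cons,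
    Multiset.map_singleton, Multiset.prod_singleton]
  ring

omit hμ in
theorem integrable_mul_mul_norm_sq (a b : Fin 3) :
    Integrable (fun x : E3 => x a * x b * ‖x‖ ^ 2 * g ‖x‖) μ := by
  simp only [mul_mul_norm_sq_eq_sum]
  exact integrable_finsetSum _ fun c _ => hg _ rfl

omit hμ in
theorem integral_mul_mul_norm_sq (a b : Fin 3) :
    ∫ x, x a * x b * ‖x‖ ^ 2 * g ‖x‖ ∂μ = ∑ c, radialMoment μ g {a, b, c, c} := by
  simp only [mul_mul_norm_sq_eq_sum]
  exact integral_finsetSum _ fun c _ => hg _ rfl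

theorem integral_cubicKernelGradNumerator_mul (k l i j : Fin 3) :
    ∫ x, cubicKernelGradNumerator k l i j x * g ‖x‖ ∂μ = 0 := by
  have hpt : ∀ x : E3, cubicKernelGradNumerator k l i j x * g ‖x‖ =
      (if k = j then 1 else 0) * (x l * x i * ‖x‖ ^ 2 * g ‖x‖) +
      (if l = j then 1 else 0) * (x k * x i * ‖x‖ ^ 2 * g ‖x‖) +
      (if i = j then 1 else 0) * (x k * x l * ‖x‖ ^ 2 * g ‖x‖) -
      5 * ((({k, l, i, j} : Multiset (Fin 3)).map x).prod * g ‖x‖) := fun x => by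
    simp only [cubicKernelGradNumerator, Multiset.insert_eq_cons, Multiset.map_cons,
      Multiset.prod_cons, Multiset.map_singleton, Multiset.prod_singleton]
    ring
  have hI := integrable_mul_mul_norm_sq hg
  simp only [hpt]
  have hQ := (hg {k, l, i, j} rfl).const_mul 5
  rw [integral_sub (by fun_prop) hQ, integral_add (by fun_prop) (by fun_prop),
    integral_add (by fun_prop) (by fun_prop)]
  simp only [integral_const_mul, integral_mul_mul_norm_sq hg, sum_radialMoment_trace hμ hg]
  rw [integral_prod_mul_eq_radialMoment, radialMoment_quartic hμ hg k l i j, isotropicFourTensor]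
  ring
end QuarticMoments

section Annulus
variable {E : Type*} [NormedAddCommGroup E]

theorem measurePreserving_restrict_norm_preimage [InnerProductSpace ℝ E] [FiniteDimensional ℝ E]
    [MeasurableSpace E] [BorelSpace E] (T : E ≃ₗᵢ[ℝ] E) {I : Set ℝ} (hI : MeasurableSet I) :
    MeasurePreserving T (volume.restrict ((‖·‖) ⁻¹' I)) (volume.restrict ((‖·‖) ⁻¹' I)) := by
  have h := T.measurePreserving.restrict_preimage (measurable_norm hI)
  have hpre : T ⁻¹' ((‖·‖) ⁻¹' I) = (‖·‖) ⁻¹' I := by ext x; simp [T.norm_map]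
  rwa [hpre] at h

theorem measurableSet_annulus [MeasurableSpace E] [OpensMeasurableSpace E] (t t' : ℝ) :
    MeasurableSet {x : E | t < ‖x‖ ∧ ‖x‖ < t'} :=
  measurable_norm measurableSet_Ioo

theorem continuousOn_inv_norm_pow (n : ℕ) : ContinuousOn (fun x : E => (‖x‖ ^ n)⁻¹) {0}ᶜ :=
  (continuous_norm.pow n).continuousOn.inv₀ fun _ hx => pow_ne_zero _ (norm_ne_zero_iff.mpr hx)

theorem integrableOn_annulus_of_continuousOn [ProperSpace E] [MeasurableSpace E]
    [OpensMeasurableSpace E] {μ : Measure E} [IsFiniteMeasureOnCompacts μ] {F : Type*}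
    [NormedAddCommGroup F] {f : E → F}
    (hf : ContinuousOn f {0}ᶜ) {t t' : ℝ} (ht : 0 < t) :
    IntegrableOn f {x | t < ‖x‖ ∧ ‖x‖ < t'} μ := by
  have hK : IsCompact (closedBall (0 : E) t' ∩ {x | t ≤ ‖x‖}) :=
    (isCompact_closedBall _ _).inter_right (isClosed_le continuous_const continuous_norm)
  refine ((hf.mono fun x hx => ?_).integrableOn_compact hK).mono_set fun x hx => ?_
  · simpa using (ht.trans_le hx.2).ne'
  · exact ⟨by simpa using hx.2.le, hx.1.le⟩
end Annulus

section HomPart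
variable (S : Matrix (Fin 3) (Fin 3) ℝ) {t t' : ℝ} (ht : 0 < t)
include ht

theorem integral_cubicKernelGradNumerator_div_annulus (k l i j : Fin 3) :
    ∫ x in {x : E3 | t < ‖x‖ ∧ ‖x‖ < t'}, cubicKernelGradNumerator k l i j x / ‖x‖ ^ 7 = 0 := by
  simp only [div_eq_mul_inv]
  refine integral_cubicKernelGradNumerator_mul (g := fun r => (r ^ 7)⁻¹)
    (fun T => measurePreserving_restrict_norm_preimage T measurableSet_Ioo) (fun s _ => ?_) k l i j
  refine integrableOn_annulus_of_continuousOn (ContinuousOn.mul ?_ ?_) ht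
  · exact (continuous_multiset_prod _ fun m _ =>
      (EuclideanSpace.proj (𝕜 := ℝ) m).continuous).continuousOn
  · exact continuousOn_inv_norm_pow 7

theorem eqOn_fderiv_homPart_annulus (a b : Fin 3) :
    Set.EqOn (fun x => fderiv ℝ (homPart S) x (e3 b) a)
      (fun x => -(5 / 2) * ∑ k, ∑ l, S k l * (cubicKernelGradNumerator k l a b x / ‖x‖ ^ 7))
      {x : E3 | t < ‖x‖ ∧ ‖x‖ < t'} :=
  fun _ hx => fderiv_homPart_apply S (norm_pos_iff.mp (ht.trans hx.1)) a b

theorem integrableOn_cubicKernelGradNumerator_div_annulus (k l i j : Fin 3) :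
    IntegrableOn (fun x => cubicKernelGradNumerator k l i j x / ‖x‖ ^ 7)
      {x : E3 | t < ‖x‖ ∧ ‖x‖ < t'} := by
  simp only [div_eq_mul_inv]
  exact integrableOn_annulus_of_continuousOn
    ((continuous_cubicKernelGradNumerator k l i j).continuousOn.mul (continuousOn_inv_norm_pow 7)) ht

theorem integrableOn_fderiv_homPart_annulus (a b : Fin 3) :
    IntegrableOn (fun x => fderiv ℝ (homPart S) x (e3 b) a) {x : E3 | t < ‖x‖ ∧ ‖x‖ < t'} := by
  refine IntegrableOn.congr_fun ?_ (eqOn_fderiv_homPart_annulus S ht a b).symm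
    (measurableSet_annulus t t')
  exact (integrable_finsetSum _ fun k _ => integrable_finsetSum _ fun l _ =>
    (integrableOn_cubicKernelGradNumerator_div_annulus ht k l a b).const_mul (S k l)).const_mul _

theorem integral_fderiv_homPart_annulus (a b : Fin 3) :
    ∫ x in {x : E3 | t < ‖x‖ ∧ ‖x‖ < t'}, fderiv ℝ (homPart S) x (e3 b) a = 0 := by
  have hI : ∀ k l, IntegrableOn (fun x => S k l * (cubicKernelGradNumerator k l a b x / ‖x‖ ^ 7))
      {x : E3 | t < ‖x‖ ∧ ‖x‖ < t'} :=
    fun k l => (integrableOn_cubicKernelGradNumerator_div_annulus ht k l a b).const_mul (S k l)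
  rw [setIntegral_congr_fun (measurableSet_annulus t t') (eqOn_fderiv_homPart_annulus S ht a b),
    integral_const_mul, integral_finsetSum _ fun k _ => integrable_finsetSum _ fun l _ => hI k l]
  refine mul_eq_zero_of_right _ (Finset.sum_eq_zero fun k _ => ?_)
  rw [integral_finsetSum _ fun l _ => hI k l]
  refine Finset.sum_eq_zero fun l _ => ?_
  rw [integral_const_mul, integral_cubicKernelGradNumerator_div_annulus ht, mul_zero]
end HomPart

theorem annulus_integral_M_eq_zero_general (S : Matrix (Fin 3) (Fin 3) ℝ) :
    ∀ t t' : ℝ, 0 < t → t < t' →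
      ∀ i j, ∫ x in {x : E3 | t < ‖x‖ ∧ ‖x‖ < t'}, symGrad (homPart S) x i j = 0 := by
  intro t t' ht _ i j
  simp only [symGrad, Matrix.of_apply]
  rw [integral_div, integral_add (integrableOn_fderiv_homPart_annulus S ht i j)
    (integrableOn_fderiv_homPart_annulus S ht j i), integral_fderiv_homPart_annulus S ht,
    integral_fderiv_homPart_annulus S ht]
  norm_num

/-- **Vanishing annulus averages of the Calderón–Zygmund kernel `𝓜(·)S`**:
with `𝓜(x)S := D(homPart S)(x)`, for all `0 < t < t'`,
`∫_{t < |x| < t'} 𝓜(x)S dx = 0` entrywise. -/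
theorem annulus_integral_M_eq_zero (S : Matrix (Fin 3) (Fin 3) ℝ)
    (hSsym : S.IsSymm) (hStr : S.trace = 0) :
    ∀ t t' : ℝ, 0 < t → t < t' →
      ∀ i j, ∫ x in {x : E3 | t < ‖x‖ ∧ ‖x‖ < t'}, symGrad (homPart S) x i j = 0 :=
  annulus_integral_M_eq_zero_general S
end
end

section
/- Under hypotheses (H2)–(H3) on the correlation functions, there exist q' ∈ [1,∞) and F' ∈ L^{q'}(ℝ³) ∩ L^∞(ℝ³) such that for all y, z ∈ ℝ³: g₃(0,y,z) = g₂(0,y)g₂(0,z) + (g₂(y,z) − 1)g₂(0,z) + R̃₂(y,z), with |R̃₂(y,z)| ≤ F'(y−z)F'(y). -/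
noncomputable section
open MeasureTheory Metric Real Filter

/-- `F ∈ L^q(ℝ³) ∩ L^∞(ℝ³)`. -/
def MemLqLinf (q : ℝ) (F : E3 → ℝ) : Prop :=
  MemLp F (ENNReal.ofReal q) volume ∧ MemLp F ⊤ volume

/-!
Writing `R̃₂ = g₃(0,y,z) − g₂(0,y)g₂(0,z) − (g₂(y,z) − 1)g₂(0,z)`, (H3) gives
`R̃₂ = g₂(0,y)R₂(y,z) − (g₂(y,z) − 1)g₂(0,z)`, of size `≲ F(y−z)`, while (H3) applied to
`g₃(0,y,z) = g₃(0,y−z,−z)` (symmetry and translation invariance) gives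
`R̃₂ = g₂(y,z)R₂(y−z,−z) − (g₂(0,y) − 1)g₂(0,z)`, of size `≲ F(y)`.
A quantity bounded by both `K F(y−z)` and `K F(y)` is bounded by their geometric mean, so
`F' = √(K F) ∈ L^{2q} ∩ L^∞` works.
-/

section Correlation

variable {G : Type*} [AddCommGroup G]

lemma twoPoint_eq_zero_sub {g₂ : G → G → ℝ} (hperm : ∀ a b, g₂ a b = g₂ b a)
    (htrans : ∀ a b t, g₂ (a + t) (b + t) = g₂ a b) (y z : G) :
    g₂ y z = g₂ 0 (y - z) := by
  simpa [hperm y z] using htrans 0 (y - z) z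

lemma threePoint_zero_eq {g₃ : G → G → G → ℝ} (hperm₁ : ∀ a b c, g₃ a b c = g₃ b a c)
    (hperm₂ : ∀ a b c, g₃ a b c = g₃ a c b)
    (htrans : ∀ a b c t, g₃ (a + t) (b + t) (c + t) = g₃ a b c) (y z : G) :
    g₃ 0 y z = g₃ 0 (y - z) (-z) := by
  calc g₃ 0 y z = g₃ (-z + z) (y - z + z) (0 + z) := by simp [hperm₂ 0 y z]
    _ = g₃ (-z) (y - z) 0 := htrans _ _ _ _
    _ = g₃ 0 (y - z) (-z) := by rw [hperm₂, hperm₁, hperm₂]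

end Correlation

lemma abs_mul_sub_sub_one_mul_le {a b c r B f : ℝ} (ha : |a| ≤ B) (hc : |c| ≤ B)
    (hr : |r| ≤ f) (hb : |b - 1| ≤ f) : |a * r - (b - 1) * c| ≤ 2 * B * f := by
  have hB : 0 ≤ B := (abs_nonneg a).trans ha
  have hf : 0 ≤ f := (abs_nonneg r).trans hr
  calc |a * r - (b - 1) * c| ≤ |a| * |r| + |b - 1| * |c| := by
        rw [← abs_mul, ← abs_mul]; exact abs_sub _ _
    _ ≤ B * f + f * B := by gcongr
    _ = 2 * B * f := by ring

lemma le_sqrt_mul_sqrt_of_le_of_le {x a b : ℝ} (hx : 0 ≤ x) (ha : x ≤ a) (hb : x ≤ b) :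
    x ≤ √a * √b :=
  calc x = √x * √x := (mul_self_sqrt hx).symm
    _ ≤ √a * √b := by gcongr

lemma MeasureTheory.MemLp.sqrt_norm {α E : Type*} [MeasurableSpace α] [NormedAddCommGroup E]
    {μ : Measure α} {p : ENNReal} {f : α → E} (hf : MemLp f p μ) :
    MemLp (fun x => √‖f x‖) (p * 2) μ := by
  have h := hf.norm_rpow_div 2⁻¹
  simp only [ENNReal.toReal_inv, ENNReal.toReal_ofNat, div_eq_mul_inv, inv_inv] at h
  simpa only [sqrt_eq_rpow, one_div] using h

lemma MemLqLinf.sqrt_const_mul {q : ℝ} {F : E3 → ℝ} (hF : MemLqLinf q F) (hF0 : ∀ x, 0 ≤ F x)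
    (K : ℝ) : MemLqLinf (q * 2) fun x => √(K * F x) := by
  have hfun : (fun x => √(K * F x)) = fun x => √K * √‖F x‖ := by
    funext x; rw [sqrt_mul' _ (hF0 x), norm_of_nonneg (hF0 x)]
  rw [hfun, MemLqLinf, ENNReal.ofReal_mul' zero_le_two, ENNReal.ofReal_ofNat]
  exact ⟨hF.1.sqrt_norm.const_mul _, by simpa using hF.2.sqrt_norm.const_mul √K⟩

theorem refined_g3_decomposition_general
    (g₂ : E3 → E3 → ℝ) (g₃ : E3 → E3 → E3 → ℝ)
    (hg₂nonneg : ∀ a b, 0 ≤ g₂ a b)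
    (hg₂bdd : ∃ C : ℝ, ∀ a b, g₂ a b ≤ C)
    (hg₂perm : ∀ a b, g₂ a b = g₂ b a)
    (hg₃perm₁ : ∀ a b c, g₃ a b c = g₃ b a c)
    (hg₃perm₂ : ∀ a b c, g₃ a b c = g₃ a c b)
    (hg₂trans : ∀ a b t : E3, g₂ (a + t) (b + t) = g₂ a b)
    (hg₃trans : ∀ a b c t : E3, g₃ (a + t) (b + t) (c + t) = g₃ a b c)
    (q : ℝ) (hq : 1 < q) (F : E3 → ℝ) (hF : MemLqLinf q F)
    (hH2 : ∀ y : E3, |g₂ 0 y - 1| ≤ F y)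
    (hH3 : ∃ R₂ : E3 → E3 → ℝ,
        (∀ y z : E3, g₃ 0 y z = g₂ 0 y * (g₂ 0 z + R₂ y z)) ∧
        ∀ y z : E3, |R₂ y z| ≤ F (y - z))
    :
    ∃ q' : ℝ, 1 ≤ q' ∧ ∃ F' : E3 → ℝ, MemLqLinf q' F' ∧
      ∃ R' : E3 → E3 → ℝ,
        (∀ y z : E3, g₃ 0 y z = g₂ 0 y * g₂ 0 z + (g₂ y z - 1) * g₂ 0 z + R' y z) ∧
        ∀ y z : E3, |R' y z| ≤ F' (y - z) * F' y := by
  obtain ⟨C, hC⟩ := hg₂bdd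
  obtain ⟨R₂, hR₂eq, hR₂bd⟩ := hH3
  have hg₂abs a b : |g₂ a b| ≤ C := (abs_of_nonneg (hg₂nonneg a b)).trans_le (hC a b)
  have hF0 x : 0 ≤ F x := (abs_nonneg _).trans (hH2 x)
  have hg₂eq := twoPoint_eq_zero_sub hg₂perm hg₂trans
  refine ⟨q * 2, by linarith, fun x => √(2 * C * F x), hF.sqrt_const_mul hF0 _,
    fun y z => g₃ 0 y z - g₂ 0 y * g₂ 0 z - (g₂ y z - 1) * g₂ 0 z, fun y z => by ring,
    fun y z => le_sqrt_mul_sqrt_of_le_of_le (abs_nonneg _) ?_ ?_⟩ <;> beta_reduce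
  · have hR : g₃ 0 y z - g₂ 0 y * g₂ 0 z - (g₂ y z - 1) * g₂ 0 z
        = g₂ 0 y * R₂ y z - (g₂ y z - 1) * g₂ 0 z := by rw [hR₂eq]; ring
    rw [hR]
    exact abs_mul_sub_sub_one_mul_le (hg₂abs _ _) (hg₂abs _ _) (hR₂bd y z)
      (hg₂eq y z ▸ hH2 (y - z))
  · have hR : g₃ 0 y z - g₂ 0 y * g₂ 0 z - (g₂ y z - 1) * g₂ 0 z
        = g₂ y z * R₂ (y - z) (-z) - (g₂ 0 y - 1) * g₂ 0 z := by
      have hneg : g₂ 0 (-z) = g₂ 0 z := by simpa using (hg₂eq 0 z).symm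
      rw [threePoint_zero_eq hg₃perm₁ hg₃perm₂ hg₃trans, hR₂eq, ← hg₂eq, hneg]
      ring
    rw [hR]
    exact abs_mul_sub_sub_one_mul_le (hg₂abs _ _) (hg₂abs _ _)
      (by simpa using hR₂bd (y - z) (-z)) (hH2 y)

/-- **(H3′)** Refined decomposition of the three-point correlation function:
under (H2)–(H3), `g₃(0,y,z) = g₂(0,y)g₂(0,z) + (g₂(y,z) − 1)g₂(0,z) + R̃₂(y,z)`
with `|R̃₂(y,z)| ≤ F′(y−z) F′(y)` for some `F′ ∈ L^{q′} ∩ L^∞`. -/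
theorem refined_g3_decomposition
    (g₂ : E3 → E3 → ℝ) (g₃ : E3 → E3 → E3 → ℝ)
    (hg₂meas : Measurable fun p : E3 × E3 => g₂ p.1 p.2)
    (hg₃meas : Measurable fun p : E3 × E3 × E3 => g₃ p.1 p.2.1 p.2.2)
    (hg₂nonneg : ∀ a b, 0 ≤ g₂ a b) (hg₃nonneg : ∀ a b c, 0 ≤ g₃ a b c)
    (hg₂bdd : ∃ C : ℝ, ∀ a b, g₂ a b ≤ C) (hg₃bdd : ∃ C : ℝ, ∀ a b c, g₃ a b c ≤ C)
    (hg₂perm : ∀ a b, g₂ a b = g₂ b a)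
    (hg₃perm₁ : ∀ a b c, g₃ a b c = g₃ b a c)
    (hg₃perm₂ : ∀ a b c, g₃ a b c = g₃ a c b)
    (hg₂trans : ∀ a b t : E3, g₂ (a + t) (b + t) = g₂ a b)
    (hg₃trans : ∀ a b c t : E3, g₃ (a + t) (b + t) (c + t) = g₃ a b c)
    (q : ℝ) (hq : 1 < q) (F : E3 → ℝ) (hF : MemLqLinf q F)
    (hF0 : Tendsto F (cocompact E3) (nhds 0))
    (hH2 : ∀ y : E3, |g₂ 0 y - 1| ≤ F y)
    (hH3 : ∃ R₂ : E3 → E3 → ℝ,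
        (∀ y z : E3, g₃ 0 y z = g₂ 0 y * (g₂ 0 z + R₂ y z)) ∧
        ∀ y z : E3, |R₂ y z| ≤ F (y - z))
    :
    ∃ q' : ℝ, 1 ≤ q' ∧ ∃ F' : E3 → ℝ, MemLqLinf q' F' ∧
      ∃ R' : E3 → E3 → ℝ,
        (∀ y z : E3, g₃ 0 y z = g₂ 0 y * g₂ 0 z + (g₂ y z - 1) * g₂ 0 z + R' y z) ∧
        ∀ y z : E3, |R' y z| ≤ F' (y - z) * F' y :=
  refined_g3_decomposition_general g₂ g₃ hg₂nonneg hg₂bdd hg₂perm hg₃perm₁ hg₃perm₂ hg₂trans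
    hg₃trans q hq F hF hH2 hH3
end
end

section
/- Under hypotheses (H2)–(H4) on the correlation functions, there exist q' ∈ [1,∞) and F' ∈ L^{q'}(ℝ³) ∩ L^∞(ℝ³) such that for all y, z, z' ∈ ℝ³: g₄(0,y,z,z') = g₃(0,y,z)g₃(0,y,z')/g₂(0,y) + g₃(0,z,z')g₃(y,z,z')/g₂(z,z') − g₂(0,z)g₂(y,z)g₂(0,z')g₂(y,z') + R̃₃(y,z,z'), with |R̃₃(y,z,z')| ≤ F'(y)F'(z−z'). -/
noncomputable section
open MeasureTheory Metric Real Filter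

open scoped ENNReal

/-!
Write `A`, `B`, `P` for the three main terms, so that `R̃₃ = (g₄ - A) + (g₄ - B) + (P - g₄)`.
(H4) gives `|g₄ - A| ≲ F(z - z')`, and (H4) applied after exchanging the pairs `{0, y}` and
`{z, z'}` gives `|g₄ - B| ≲ F(y)`. If `F(z - z') < 1/2` then `g₂(z, z') ≥ 1/2` by (H2), and
factoring both three-point functions of `B` through (H3) gives `|P - B| ≲ t + t²` with
`t = F(z - z')`; symmetrically `|P - A| ≲ F(y) + F(y)²` if `F(y) < 1/2`. So `R̃₃` is bounded by
`φ(F y)²` and by `φ(F(z - z'))²` whenever the corresponding argument is small, where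
`φ(t) = √t + t`, and by `1 + F(y) + F(z - z')` always; as `min(u², v²) ≤ uv`, this gives
`|R̃₃| ≲ φ(F y) φ(F(z - z'))`. Finally `φ ∘ F ∈ L^{2q} ∩ L^∞`.
-/

lemma add_sq_le_sqrt_add_sq {t : ℝ} (ht : 0 ≤ t) : t + t ^ 2 ≤ (√t + t) ^ 2 := by
  nlinarith [sq_sqrt ht, sqrt_nonneg t, mul_nonneg (sqrt_nonneg t) ht]

lemma one_add_le_two_mul_sqrt_add {t : ℝ} (ht : 1 / 4 ≤ t) : 1 + t ≤ 2 * (√t + t) := by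
  have : 1 / 2 ≤ √t := le_sqrt_of_sq_le (by linarith)
  linarith

lemma le_mul_mul_of_le_mul_sq {K P x y : ℝ} (hK : 0 ≤ K) (hx : 0 ≤ x) (hy : 0 ≤ y)
    (hPx : P ≤ K * x ^ 2) (hPy : P ≤ K * y ^ 2) : P ≤ K * (x * y) := by
  rcases le_total x y with hxy | hxy
  · exact hPx.trans (by rw [sq]; gcongr)
  · exact hPy.trans (by rw [sq, mul_comm x]; gcongr)

lemma le_four_mul_sqrt_add_mul_sqrt_add_of_half_le_of_lt_half {K a b P : ℝ} (hK : 0 ≤ K)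
    (hb : 0 ≤ b) (ha : 1 / 2 ≤ a) (hb' : b < 1 / 2) (hP : P ≤ K * (b + b ^ 2)) :
    P ≤ 4 * K * ((√a + a) * (√b + b)) := by
  have ha2 : 1 ≤ 2 * (√a + a) := by linarith [one_add_le_two_mul_sqrt_add (by linarith : 1 / 4 ≤ a)]
  have hb2 : b + b ^ 2 ≤ 2 * (√b + b) := by nlinarith [sqrt_nonneg b]
  calc P ≤ K * (2 * (√b + b)) := hP.trans (mul_le_mul_of_nonneg_left hb2 hK)
    _ ≤ K * (2 * (2 * (√a + a)) * (√b + b)) := by gcongr; linarith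
    _ = 4 * K * ((√a + a) * (√b + b)) := by ring

lemma le_four_mul_sqrt_add_mul_sqrt_add {K a b P : ℝ} (hK : 0 ≤ K) (ha : 0 ≤ a) (hb : 0 ≤ b)
    (hPa : a < 1 / 2 → P ≤ K * (a + a ^ 2)) (hPb : b < 1 / 2 → P ≤ K * (b + b ^ 2))
    (hP : P ≤ K * (1 + a + b)) :
    P ≤ 4 * K * ((√a + a) * (√b + b)) := by
  have hφa : 0 ≤ √a + a := by positivity
  have hφb : 0 ≤ √b + b := by positivity
  rcases lt_or_ge a (1 / 2) with ha' | ha' <;> rcases lt_or_ge b (1 / 2) with hb' | hb'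
  · have h := le_mul_mul_of_le_mul_sq hK hφa hφb
      ((hPa ha').trans (by gcongr; exact add_sq_le_sqrt_add_sq ha))
      ((hPb hb').trans (by gcongr; exact add_sq_le_sqrt_add_sq hb))
    linarith [mul_nonneg hK (mul_nonneg hφa hφb)]
  · rw [mul_comm (√a + a)]
    exact le_four_mul_sqrt_add_mul_sqrt_add_of_half_le_of_lt_half hK ha hb' ha' (hPa ha')
  · exact le_four_mul_sqrt_add_mul_sqrt_add_of_half_le_of_lt_half hK hb ha' hb' (hPb hb')
  · calc P ≤ K * ((1 + a) * (1 + b)) := hP.trans (by gcongr; nlinarith)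
      _ ≤ K * ((2 * (√a + a)) * (2 * (√b + b))) := by
          gcongr
          · exact one_add_le_two_mul_sqrt_add (by linarith)
          · exact one_add_le_two_mul_sqrt_add (by linarith)
      _ = 4 * K * ((√a + a) * (√b + b)) := by ring

lemma abs_sub_mul_div_le {x c d s r C f : ℝ} (hx : x = c * (d / s + r)) (hc : |c| ≤ C)
    (hr : |r| ≤ f) : |x - c * d / s| ≤ C * f := by
  rw [hx, show c * (d / s + r) - c * d / s = c * r by ring, abs_mul]
  exact mul_le_mul hc hr (abs_nonneg r) ((abs_nonneg c).trans hc)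

lemma abs_mul_mul_sub_div_le {C t s X Y Z W r r' : ℝ} (hX : 0 ≤ X) (hY : 0 ≤ Y) (hZ : 0 ≤ Z)
    (hW : 0 ≤ W) (hXC : X ≤ C) (hYC : Y ≤ C) (hZC : Z ≤ C) (hWC : W ≤ C) (hs : 1 / 2 ≤ s)
    (hst : |s - 1| ≤ t) (hr : |r| ≤ t) (hr' : |r'| ≤ t) :
    |X * Z * (Y * W) - X * (Z + r) * (Y * (W + r')) / s| ≤ 2 * (C * (C + 1)) ^ 2 * (t + t ^ 2) := by
  have hs0 : 0 < s := by linarith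
  have ht : 0 ≤ t := (abs_nonneg r).trans hr
  have hC : 0 ≤ C := hX.trans hXC
  have hfactor : X * Z * (Y * W) - X * (Z + r) * (Y * (W + r')) / s
      = X * Y / s * ((s - 1) * (Z * W) - Z * r' - W * r - r * r') := by
    field_simp
    ring
  have hcoef : |X * Y / s| ≤ 2 * C ^ 2 := by
    rw [abs_of_nonneg (by positivity), div_le_iff₀ hs0]
    nlinarith [mul_le_mul hXC hYC hY hC]
  have hbracket : |(s - 1) * (Z * W) - Z * r' - W * r - r * r'| ≤ (C + 1) ^ 2 * (t + t ^ 2) :=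
    calc |(s - 1) * (Z * W) - Z * r' - W * r - r * r'|
        ≤ |(s - 1) * (Z * W)| + |Z * r'| + |W * r| + |r * r'| :=
          (abs_sub _ _).trans (add_le_add_left ((abs_sub _ _).trans
            (add_le_add_left (abs_sub _ _) _)) _)
      _ ≤ t * (C * C) + C * t + C * t + t * t := by
          simp only [abs_mul, abs_of_nonneg hZ, abs_of_nonneg hW]
          gcongr
      _ ≤ (C + 1) ^ 2 * (t + t ^ 2) := by
          nlinarith [mul_nonneg hC ht, mul_nonneg (mul_nonneg hC hC) ht]
  rw [hfactor, abs_mul]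
  calc |X * Y / s| * |(s - 1) * (Z * W) - Z * r' - W * r - r * r'|
      ≤ 2 * C ^ 2 * ((C + 1) ^ 2 * (t + t ^ 2)) :=
        mul_le_mul hcoef hbracket (abs_nonneg _) (by positivity)
    _ = 2 * (C * (C + 1)) ^ 2 * (t + t ^ 2) := by ring

lemma abs_sub_add_sub_le {x A B P a b K : ℝ} (hK : 0 ≤ K) (ha : 0 ≤ a) (hb : 0 ≤ b)
    (hA : |x - A| ≤ K * b) (hB : |x - B| ≤ K * a) (hP : |P - x| ≤ K)
    (hPA : a < 1 / 2 → |P - A| ≤ K * (a + a ^ 2)) (hPB : b < 1 / 2 → |P - B| ≤ K * (b + b ^ 2)) :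
    |x - (A + B - P)| ≤ 8 * K * ((√a + a) * (√b + b)) := by
  rw [show 8 * K = 4 * (2 * K) by ring]
  apply le_four_mul_sqrt_add_mul_sqrt_add (by positivity) ha hb
  · intro ha'
    calc |x - (A + B - P)| = |(x - B) + (P - A)| := by ring_nf
      _ ≤ K * a + K * (a + a ^ 2) := (abs_add_le _ _).trans (add_le_add hB (hPA ha'))
      _ ≤ 2 * K * (a + a ^ 2) := by nlinarith [mul_nonneg hK (sq_nonneg a)]
  · intro hb'
    calc |x - (A + B - P)| = |(x - A) + (P - B)| := by ring_nf
      _ ≤ K * b + K * (b + b ^ 2) := (abs_add_le _ _).trans (add_le_add hA (hPB hb'))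
      _ ≤ 2 * K * (b + b ^ 2) := by nlinarith [mul_nonneg hK (sq_nonneg b)]
  · calc |x - (A + B - P)| = |(x - A) + (x - B) + (P - x)| := by ring_nf
      _ ≤ K * b + K * a + K :=
          (abs_add_le _ _).trans (add_le_add ((abs_add_le _ _).trans (add_le_add hA hB)) hP)
      _ ≤ 2 * K * (1 + a + b) := by nlinarith [mul_nonneg hK ha, mul_nonneg hK hb]

section Lp

variable {α : Type*} [MeasurableSpace α] {μ : Measure α} {p : ℝ≥0∞} {f : α → ℝ}

lemma MeasureTheory.MemLp.sqrt (hf : MemLp f p μ) : MemLp (fun x => √(f x)) (2 * p) μ := by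
  have h := hf.norm_rpow_div 2⁻¹
  rw [ENNReal.div_eq_inv_mul, inv_inv] at h
  refine h.of_le (continuous_sqrt.comp_aestronglyMeasurable hf.1) (ae_of_all _ fun x => ?_)
  rw [norm_of_nonneg (sqrt_nonneg _), ENNReal.toReal_inv, ENNReal.toReal_ofNat, ← one_div,
    ← sqrt_eq_rpow, norm_of_nonneg (sqrt_nonneg _), norm_eq_abs]
  exact sqrt_le_sqrt (le_abs_self _)

lemma MeasureTheory.MemLp.two_mul_of_top (hf : MemLp f p μ) (hf_top : MemLp f ⊤ μ) : MemLp f (2 * p) μ := by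
  have h_top := hf_top.norm.sqrt
  rw [ENNReal.mul_top two_ne_zero] at h_top
  have h := hf.norm.sqrt.mul h_top (r := 2 * p)
  refine (memLp_norm_iff hf.1).1 (h.congr_norm hf.1.norm (ae_of_all _ fun x => ?_))
  simp

end Lp

lemma memLqLinf_const_mul_sqrt_add {q c : ℝ} {F : E3 → ℝ} (hF : MemLqLinf q F) :
    MemLqLinf (2 * q) (fun x => c * (√(F x) + F x)) := by
  obtain ⟨hFq, hF_top⟩ := hF
  have h_top := hF_top.sqrt
  rw [ENNReal.mul_top two_ne_zero] at h_top
  refine ⟨?_, (h_top.add hF_top).const_mul c⟩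
  rw [ENNReal.ofReal_mul zero_le_two, ENNReal.ofReal_ofNat]
  exact (hFq.sqrt.add (hFq.two_mul_of_top hF_top)).const_mul c

section Correlation

variable {V : Type*} [AddCommGroup V]

def refinedRemainder (g₂ : V → V → ℝ) (g₃ : V → V → V → ℝ) (g₄ : V → V → V → V → ℝ)
    (y z z' : V) : ℝ :=
  g₄ 0 y z z' - (g₃ 0 y z * g₃ 0 y z' / g₂ 0 y + g₃ 0 z z' * g₃ y z z' / g₂ z z'
    - g₂ 0 z * g₂ y z * g₂ 0 z' * g₂ y z')

lemma apply₂_eq_apply_zero {g : V → V → ℝ} (htrans : ∀ a b t : V, g (a + t) (b + t) = g a b)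
    (a b : V) : g a b = g 0 (b - a) := by
  simpa using htrans 0 (b - a) a

lemma apply₃_eq_apply_zero {g : V → V → V → ℝ}
    (htrans : ∀ a b c t : V, g (a + t) (b + t) (c + t) = g a b c) (a b c : V) :
    g a b c = g 0 (b - a) (c - a) := by
  simpa using htrans 0 (b - a) (c - a) a

lemma apply₄_eq_apply_zero {g : V → V → V → V → ℝ}
    (htrans : ∀ a b c d t : V, g (a + t) (b + t) (c + t) (d + t) = g a b c d) (a b c d : V) :
    g a b c d = g 0 (b - a) (c - a) (d - a) := by
  simpa using htrans 0 (b - a) (c - a) (d - a) a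

variable {g₂ : V → V → ℝ} {g₃ : V → V → V → ℝ} {g₄ : V → V → V → V → ℝ} {F : V → ℝ}

lemma abs_apply₂_sub_one_le (hg₂perm : ∀ a b, g₂ a b = g₂ b a)
    (hg₂trans : ∀ a b t : V, g₂ (a + t) (b + t) = g₂ a b) (hH2 : ∀ y : V, |g₂ 0 y - 1| ≤ F y)
    (a b : V) : |g₂ a b - 1| ≤ F (a - b) := by
  rw [hg₂perm, apply₂_eq_apply_zero hg₂trans]
  exact hH2 _

lemma apply₃_eq_mul_of_H3 {R₂ : V → V → ℝ} (hg₂trans : ∀ a b t : V, g₂ (a + t) (b + t) = g₂ a b)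
    (hg₃trans : ∀ a b c t : V, g₃ (a + t) (b + t) (c + t) = g₃ a b c)
    (hR₂ : ∀ y z : V, g₃ 0 y z = g₂ 0 y * (g₂ 0 z + R₂ y z)) (x y z : V) :
    g₃ x y z = g₂ x y * (g₂ x z + R₂ (y - x) (z - x)) := by
  rw [apply₃_eq_apply_zero hg₃trans, hR₂, ← apply₂_eq_apply_zero hg₂trans,
    ← apply₂_eq_apply_zero hg₂trans]

lemma apply₄_zero_eq_mul_swap {R₃ : V → V → V → ℝ}
    (hg₃perm₁ : ∀ a b c, g₃ a b c = g₃ b a c) (hg₃perm₂ : ∀ a b c, g₃ a b c = g₃ a c b)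
    (hg₄perm₁ : ∀ a b c d, g₄ a b c d = g₄ b a c d) (hg₄perm₂ : ∀ a b c d, g₄ a b c d = g₄ a c b d)
    (hg₄perm₃ : ∀ a b c d, g₄ a b c d = g₄ a b d c)
    (hg₂trans : ∀ a b t : V, g₂ (a + t) (b + t) = g₂ a b)
    (hg₃trans : ∀ a b c t : V, g₃ (a + t) (b + t) (c + t) = g₃ a b c)
    (hg₄trans : ∀ a b c d t : V, g₄ (a + t) (b + t) (c + t) (d + t) = g₄ a b c d)
    (hR₃ : ∀ y z z' : V, g₄ 0 y z z' = g₃ 0 y z * (g₃ 0 y z' / g₂ 0 y + R₃ y z z')) (y z z' : V) :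
    g₄ 0 y z z' = g₃ y z z' * (g₃ 0 z z' / g₂ z z' + R₃ (z' - z) (y - z) (-z)) := by
  have h₄ : g₄ 0 y z z' = g₄ z z' y 0 := by
    rw [hg₄perm₃ z z' y 0, hg₄perm₂ z z' 0 y, hg₄perm₁ z 0 z' y, hg₄perm₃ 0 z z' y,
      hg₄perm₂ 0 z y z']
  have h₃ : g₃ y z z' = g₃ z z' y := by rw [hg₃perm₂ z z' y, hg₃perm₁ z y z']
  have h₃' : g₃ 0 z z' = g₃ z z' 0 := by rw [hg₃perm₂ z z' 0, hg₃perm₁ z 0 z']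
  rw [h₄, h₃, h₃', apply₄_eq_apply_zero hg₄trans, apply₃_eq_apply_zero hg₃trans z z' y,
    apply₃_eq_apply_zero hg₃trans z z' 0, apply₂_eq_apply_zero hg₂trans z z', zero_sub, hR₃]

lemma abs_prod_sub_div_le {R₂ : V → V → ℝ} {C : ℝ} (hg₂nonneg : ∀ a b, 0 ≤ g₂ a b)
    (hC : ∀ a b, g₂ a b ≤ C) (hg₃ : ∀ x y z, g₃ x y z = g₂ x y * (g₂ x z + R₂ (y - x) (z - x)))
    (hR₂F : ∀ y z, |R₂ y z| ≤ F (y - z)) (hg₂F : ∀ a b, |g₂ a b - 1| ≤ F (a - b))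
    {w₁ w₂ x₁ x₂ : V} (hx : F (x₁ - x₂) < 1 / 2) :
    |g₂ w₁ x₁ * g₂ w₁ x₂ * (g₂ w₂ x₁ * g₂ w₂ x₂) - g₃ w₁ x₁ x₂ * g₃ w₂ x₁ x₂ / g₂ x₁ x₂|
      ≤ 2 * (C * (C + 1)) ^ 2 * (F (x₁ - x₂) + F (x₁ - x₂) ^ 2) := by
  have hs : 1 / 2 ≤ g₂ x₁ x₂ := by linarith [(abs_le.1 (hg₂F x₁ x₂)).1]
  have hR : ∀ w, |R₂ (x₁ - w) (x₂ - w)| ≤ F (x₁ - x₂) := fun w => by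
    simpa using hR₂F (x₁ - w) (x₂ - w)
  rw [hg₃ w₁, hg₃ w₂]
  exact abs_mul_mul_sub_div_le (hg₂nonneg _ _) (hg₂nonneg _ _) (hg₂nonneg _ _) (hg₂nonneg _ _)
    (hC _ _) (hC _ _) (hC _ _) (hC _ _) hs (hg₂F x₁ x₂) (hR w₁) (hR w₂)

lemma exists_abs_refinedRemainder_le
    (hg₂nonneg : ∀ a b, 0 ≤ g₂ a b) (hg₃nonneg : ∀ a b c, 0 ≤ g₃ a b c)
    (hg₄nonneg : ∀ a b c d, 0 ≤ g₄ a b c d)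
    (hg₂bdd : ∃ C : ℝ, ∀ a b, g₂ a b ≤ C) (hg₃bdd : ∃ C : ℝ, ∀ a b c, g₃ a b c ≤ C)
    (hg₄bdd : ∃ C : ℝ, ∀ a b c d, g₄ a b c d ≤ C)
    (hg₂perm : ∀ a b, g₂ a b = g₂ b a)
    (hg₃perm₁ : ∀ a b c, g₃ a b c = g₃ b a c) (hg₃perm₂ : ∀ a b c, g₃ a b c = g₃ a c b)
    (hg₄perm₁ : ∀ a b c d, g₄ a b c d = g₄ b a c d) (hg₄perm₂ : ∀ a b c d, g₄ a b c d = g₄ a c b d)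
    (hg₄perm₃ : ∀ a b c d, g₄ a b c d = g₄ a b d c)
    (hg₂trans : ∀ a b t : V, g₂ (a + t) (b + t) = g₂ a b)
    (hg₃trans : ∀ a b c t : V, g₃ (a + t) (b + t) (c + t) = g₃ a b c)
    (hg₄trans : ∀ a b c d t : V, g₄ (a + t) (b + t) (c + t) (d + t) = g₄ a b c d)
    (hH2 : ∀ y : V, |g₂ 0 y - 1| ≤ F y)
    (hH3 : ∃ R₂ : V → V → ℝ,
        (∀ y z : V, g₃ 0 y z = g₂ 0 y * (g₂ 0 z + R₂ y z)) ∧ ∀ y z : V, |R₂ y z| ≤ F (y - z))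
    (hH4 : ∃ R₃ : V → V → V → ℝ,
        (∀ y z z' : V, g₄ 0 y z z' = g₃ 0 y z * (g₃ 0 y z' / g₂ 0 y + R₃ y z z')) ∧
        ∀ y z z' : V, |R₃ y z z'| ≤ F (z - z')) :
    ∃ K, 0 ≤ K ∧ ∀ y z z' : V,
      |refinedRemainder g₂ g₃ g₄ y z z'| ≤ K * ((√(F y) + F y) * (√(F (z - z')) + F (z - z'))) := by
  obtain ⟨R₂, hR₂, hR₂F⟩ := hH3
  obtain ⟨R₃, hR₃, hR₃F⟩ := hH4
  obtain ⟨C₂, hC₂⟩ := hg₂bdd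
  obtain ⟨C₃, hC₃⟩ := hg₃bdd
  obtain ⟨C₄, hC₄⟩ := hg₄bdd
  have hC₂0 : 0 ≤ C₂ := (hg₂nonneg 0 0).trans (hC₂ 0 0)
  have hC₃0 : 0 ≤ C₃ := (hg₃nonneg 0 0 0).trans (hC₃ 0 0 0)
  have hC₄0 : 0 ≤ C₄ := (hg₄nonneg 0 0 0 0).trans (hC₄ 0 0 0 0)
  have hF : ∀ x, 0 ≤ F x := fun x => (abs_nonneg _).trans (hH2 x)
  have hg₃C : ∀ a b c, |g₃ a b c| ≤ C₃ := fun a b c =>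
    (abs_of_nonneg (hg₃nonneg a b c)).trans_le (hC₃ a b c)
  have hg₃ := apply₃_eq_mul_of_H3 hg₂trans hg₃trans hR₂
  have hg₂F := abs_apply₂_sub_one_le hg₂perm hg₂trans hH2
  set K := C₃ + 2 * (C₂ * (C₂ + 1)) ^ 2 + (C₂ ^ 4 + C₄) with hK
  have hK₃ : C₃ ≤ K := by rw [hK]; nlinarith [pow_nonneg hC₂0 4]
  have hK₂ : 2 * (C₂ * (C₂ + 1)) ^ 2 ≤ K := by rw [hK]; nlinarith [pow_nonneg hC₂0 4]
  have hK₄ : C₂ ^ 4 + C₄ ≤ K := by rw [hK]; nlinarith [sq_nonneg (C₂ * (C₂ + 1))]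
  have hK0 : 0 ≤ K := hC₃0.trans hK₃
  refine ⟨8 * K, by linarith, fun y z z' => ?_⟩
  apply abs_sub_add_sub_le hK0 (hF y) (hF (z - z'))
  · exact (abs_sub_mul_div_le (hR₃ y z z') (hg₃C _ _ _) (hR₃F y z z')).trans
      (by gcongr; exact hF _)
  · rw [mul_comm (g₃ 0 z z')]
    refine (abs_sub_mul_div_le (apply₄_zero_eq_mul_swap hg₃perm₁ hg₃perm₂ hg₄perm₁ hg₄perm₂
      hg₄perm₃ hg₂trans hg₃trans hg₄trans hR₃ y z z') (hg₃C _ _ _) ?_).trans (by gcongr; exact hF _)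
    simpa using hR₃F (z' - z) (y - z) (-z)
  · have hP0 : 0 ≤ g₂ 0 z * g₂ y z * g₂ 0 z' * g₂ y z' :=
      mul_nonneg (mul_nonneg (mul_nonneg (hg₂nonneg _ _) (hg₂nonneg _ _)) (hg₂nonneg _ _))
        (hg₂nonneg _ _)
    have hP : g₂ 0 z * g₂ y z * g₂ 0 z' * g₂ y z' ≤ C₂ ^ 4 := by
      calc _ ≤ C₂ * C₂ * C₂ * C₂ := by gcongr <;> first | apply hg₂nonneg | apply hC₂
        _ = C₂ ^ 4 := by ring
    rw [abs_le]
    constructor <;> linarith [hg₄nonneg 0 y z z', hC₄ 0 y z z']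
  · intro hy
    have h := abs_prod_sub_div_le hg₂nonneg hC₂ hg₃ hR₂F hg₂F (w₁ := z) (w₂ := z') (x₁ := y)
      (x₂ := 0) (by simpa using hy)
    have hg₃perm : ∀ w, g₃ w y 0 = g₃ 0 y w := fun w => by
      rw [hg₃perm₁, hg₃perm₂, hg₃perm₁]
    rw [sub_zero, hg₂perm z y, hg₂perm z 0, hg₂perm z' y, hg₂perm z' 0, hg₂perm y 0, hg₃perm,
      hg₃perm] at h
    rw [show g₂ 0 z * g₂ y z * g₂ 0 z' * g₂ y z' = g₂ y z * g₂ 0 z * (g₂ y z' * g₂ 0 z') by ring]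
    exact h.trans (mul_le_mul_of_nonneg_right hK₂ (add_nonneg (hF _) (sq_nonneg _)))
  · intro hz
    have h := abs_prod_sub_div_le hg₂nonneg hC₂ hg₃ hR₂F hg₂F (w₁ := 0) (w₂ := y) (x₁ := z)
      (x₂ := z') hz
    rw [show g₂ 0 z * g₂ y z * g₂ 0 z' * g₂ y z' = g₂ 0 z * g₂ 0 z' * (g₂ y z * g₂ y z') by ring]
    exact h.trans (mul_le_mul_of_nonneg_right hK₂ (add_nonneg (hF _) (sq_nonneg _)))

end Correlation

theorem refined_g4_decomposition_general
    (g₂ : E3 → E3 → ℝ) (g₃ : E3 → E3 → E3 → ℝ)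
    (hg₂nonneg : ∀ a b, 0 ≤ g₂ a b) (hg₃nonneg : ∀ a b c, 0 ≤ g₃ a b c)
    (hg₂bdd : ∃ C : ℝ, ∀ a b, g₂ a b ≤ C) (hg₃bdd : ∃ C : ℝ, ∀ a b c, g₃ a b c ≤ C)
    (hg₂perm : ∀ a b, g₂ a b = g₂ b a)
    (hg₃perm₁ : ∀ a b c, g₃ a b c = g₃ b a c)
    (hg₃perm₂ : ∀ a b c, g₃ a b c = g₃ a c b)
    (hg₂trans : ∀ a b t : E3, g₂ (a + t) (b + t) = g₂ a b)
    (hg₃trans : ∀ a b c t : E3, g₃ (a + t) (b + t) (c + t) = g₃ a b c)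
    (q : ℝ) (hq : 1 < q) (F : E3 → ℝ) (hF : MemLqLinf q F)
    (hH2 : ∀ y : E3, |g₂ 0 y - 1| ≤ F y)
    (hH3 : ∃ R₂ : E3 → E3 → ℝ,
        (∀ y z : E3, g₃ 0 y z = g₂ 0 y * (g₂ 0 z + R₂ y z)) ∧
        ∀ y z : E3, |R₂ y z| ≤ F (y - z))
    (g₄ : E3 → E3 → E3 → E3 → ℝ)
    (hg₄nonneg : ∀ a b c d, 0 ≤ g₄ a b c d)
    (hg₄bdd : ∃ C : ℝ, ∀ a b c d, g₄ a b c d ≤ C)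
    (hg₄perm₁ : ∀ a b c d, g₄ a b c d = g₄ b a c d)
    (hg₄perm₂ : ∀ a b c d, g₄ a b c d = g₄ a c b d)
    (hg₄perm₃ : ∀ a b c d, g₄ a b c d = g₄ a b d c)
    (hg₄trans : ∀ a b c d t : E3, g₄ (a + t) (b + t) (c + t) (d + t) = g₄ a b c d)
    (hH4 : ∃ R₃ : E3 → E3 → E3 → ℝ,
        (∀ y z z' : E3, g₄ 0 y z z' = g₃ 0 y z * (g₃ 0 y z' / g₂ 0 y + R₃ y z z')) ∧
        ∀ y z z' : E3, |R₃ y z z'| ≤ F (z - z'))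
    :
    ∃ q' : ℝ, 1 ≤ q' ∧ ∃ F' : E3 → ℝ, MemLqLinf q' F' ∧
      ∃ R' : E3 → E3 → E3 → ℝ,
        (∀ y z z' : E3, g₄ 0 y z z'
            = g₃ 0 y z * g₃ 0 y z' / g₂ 0 y
              + g₃ 0 z z' * g₃ y z z' / g₂ z z'
              - g₂ 0 z * g₂ y z * g₂ 0 z' * g₂ y z'
              + R' y z z') ∧
        ∀ y z z' : E3, |R' y z z'| ≤ F' y * F' (z - z') := by
  obtain ⟨K, hK, hR⟩ := exists_abs_refinedRemainder_le hg₂nonneg hg₃nonneg hg₄nonneg hg₂bdd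
    hg₃bdd hg₄bdd hg₂perm hg₃perm₁ hg₃perm₂ hg₄perm₁ hg₄perm₂ hg₄perm₃ hg₂trans hg₃trans hg₄trans
    hH2 hH3 hH4
  refine ⟨2 * q, by linarith, fun x => √K * (√(F x) + F x), memLqLinf_const_mul_sqrt_add hF,
    refinedRemainder g₂ g₃ g₄, fun y z z' => by unfold refinedRemainder; ring, fun y z z' => ?_⟩
  calc |refinedRemainder g₂ g₃ g₄ y z z'|
      ≤ K * ((√(F y) + F y) * (√(F (z - z')) + F (z - z'))) := hR y z z'
    _ = √K * (√(F y) + F y) * (√K * (√(F (z - z')) + F (z - z'))) := by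
        linear_combination (-(√(F y) + F y) * (√(F (z - z')) + F (z - z'))) * mul_self_sqrt hK

/-- **(H4′)** Refined decomposition of the four-point correlation function under (H2)–(H4). -/
theorem refined_g4_decomposition
    (g₂ : E3 → E3 → ℝ) (g₃ : E3 → E3 → E3 → ℝ)
    (hg₂meas : Measurable fun p : E3 × E3 => g₂ p.1 p.2)
    (hg₃meas : Measurable fun p : E3 × E3 × E3 => g₃ p.1 p.2.1 p.2.2)
    (hg₂nonneg : ∀ a b, 0 ≤ g₂ a b) (hg₃nonneg : ∀ a b c, 0 ≤ g₃ a b c)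
    (hg₂bdd : ∃ C : ℝ, ∀ a b, g₂ a b ≤ C) (hg₃bdd : ∃ C : ℝ, ∀ a b c, g₃ a b c ≤ C)
    (hg₂perm : ∀ a b, g₂ a b = g₂ b a)
    (hg₃perm₁ : ∀ a b c, g₃ a b c = g₃ b a c)
    (hg₃perm₂ : ∀ a b c, g₃ a b c = g₃ a c b)
    (hg₂trans : ∀ a b t : E3, g₂ (a + t) (b + t) = g₂ a b)
    (hg₃trans : ∀ a b c t : E3, g₃ (a + t) (b + t) (c + t) = g₃ a b c)
    (q : ℝ) (hq : 1 < q) (F : E3 → ℝ) (hF : MemLqLinf q F)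
    (hF0 : Tendsto F (cocompact E3) (nhds 0))
    (hH2 : ∀ y : E3, |g₂ 0 y - 1| ≤ F y)
    (hH3 : ∃ R₂ : E3 → E3 → ℝ,
        (∀ y z : E3, g₃ 0 y z = g₂ 0 y * (g₂ 0 z + R₂ y z)) ∧
        ∀ y z : E3, |R₂ y z| ≤ F (y - z))
    (g₄ : E3 → E3 → E3 → E3 → ℝ)
    (hg₄meas : Measurable fun p : E3 × E3 × E3 × E3 => g₄ p.1 p.2.1 p.2.2.1 p.2.2.2)
    (hg₄nonneg : ∀ a b c d, 0 ≤ g₄ a b c d)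
    (hg₄bdd : ∃ C : ℝ, ∀ a b c d, g₄ a b c d ≤ C)
    (hg₄perm₁ : ∀ a b c d, g₄ a b c d = g₄ b a c d)
    (hg₄perm₂ : ∀ a b c d, g₄ a b c d = g₄ a c b d)
    (hg₄perm₃ : ∀ a b c d, g₄ a b c d = g₄ a b d c)
    (hg₄trans : ∀ a b c d t : E3, g₄ (a + t) (b + t) (c + t) (d + t) = g₄ a b c d)
    (hv₂₃ : ∀ a b c : E3, g₂ a b = 0 → g₃ a b c = 0)
    (hv₃₄ : ∀ a b c d : E3, g₃ a b c = 0 → g₄ a b c d = 0)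
    (hH4 : ∃ R₃ : E3 → E3 → E3 → ℝ,
        (∀ y z z' : E3, g₄ 0 y z z' = g₃ 0 y z * (g₃ 0 y z' / g₂ 0 y + R₃ y z z')) ∧
        ∀ y z z' : E3, |R₃ y z z'| ≤ F (z - z'))
    :
    ∃ q' : ℝ, 1 ≤ q' ∧ ∃ F' : E3 → ℝ, MemLqLinf q' F' ∧
      ∃ R' : E3 → E3 → E3 → ℝ,
        (∀ y z z' : E3, g₄ 0 y z z'
            = g₃ 0 y z * g₃ 0 y z' / g₂ 0 y
              + g₃ 0 z z' * g₃ y z z' / g₂ z z'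
              - g₂ 0 z * g₂ y z * g₂ 0 z' * g₂ y z'
              + R' y z z') ∧
        ∀ y z z' : E3, |R' y z z'| ≤ F' y * F' (z - z') :=
  refined_g4_decomposition_general g₂ g₃ hg₂nonneg hg₃nonneg hg₂bdd hg₃bdd hg₂perm hg₃perm₁ hg₃perm₂
    hg₂trans hg₃trans q hq F hF hH2 hH3 g₄ hg₄nonneg hg₄bdd hg₄perm₁ hg₄perm₂ hg₄perm₃ hg₄trans hH4
end
end

section
/- Under hypotheses (H2)–(H3) on the correlation functions, each of the four functions (y,z) ↦ g₂(0,y), (y,z) ↦ g₂(0,z), (y,z) ↦ g₂(y,z), and (y,z) ↦ g₃(0,y,z)/g₂(0,y) (with the convention that the quotient is 0 where g₂(0,y) = 0) belongs to the class 𝒢. -/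
/-!
Write `u = g₂(0,·)`, so that `u - 1` is dominated by `F`. The first three functions are single
tensor terms, the third because translation invariance gives `g₂(y,z) = u(y - z)`.
For the quotient, (H3) gives `g₃(0,y,z)/g₂(0,y) = χ(y) (u(z) + R₂(y,z))` with `χ` the indicator
of `{u ≠ 0}`; this is `χ(y) (u(z) + u(y - z) - 1)`, a sum of three tensor terms, plus a
remainder `R`. Applying (H3) at `(0,y,z)` and at its translate `(0,-y,z-y)` bounds `|R(y,z)|`
both by `2F(y - z)` and by `2F(-z)`. Hence `|R|^{2q} ≤ (2F(y - z))^q (2F(-z))^q`, which is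
integrable on `ℝ³ × ℝ³` after the shear `(y,z) ↦ (y - z, z)`, and `R ∈ L^{2q} ∩ L^∞`.
-/

noncomputable section
open MeasureTheory Metric Real Filter

/-- A function of the form `constant + (function in L^q ∩ L^∞)`. -/
def ConstPlusLqLinf (q : ℝ) (f : E3 → ℝ) : Prop :=
  ∃ (c : ℝ) (h : E3 → ℝ), MemLqLinf q h ∧ f = fun x => c + h x

/-- The class `𝒢` of two-point functions: finite sums of tensorized terms
`G₁(y)G₂(z)G₃(y−z)` plus an `L^q ∩ L^∞` remainder. -/
def ClassG (G : E3 → E3 → ℝ) : Prop :=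
  ∃ (K : ℕ) (q : ℝ), 1 ≤ q ∧
    ∃ G₁ G₂ G₃ : Fin K → E3 → ℝ,
      (∀ k, ConstPlusLqLinf q (G₁ k) ∧ ConstPlusLqLinf q (G₂ k) ∧ ConstPlusLqLinf q (G₃ k)) ∧
      ∃ R : E3 × E3 → ℝ,
        MemLp R (ENNReal.ofReal q) (volume : Measure (E3 × E3)) ∧
        MemLp R ⊤ (volume : Measure (E3 × E3)) ∧
        ∀ y z : E3, G y z = (∑ k, G₁ k y * G₂ k z * G₃ k (y - z)) + R (y, z)

open scoped ENNReal

namespace MeasureTheory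

section Lebesgue

variable {α : Type*} [MeasurableSpace α] {μ : Measure α}

theorem MemLp.of_memLp_top_of_le {E : Type*} [NormedAddCommGroup E] {f : α → E} {q r : ℝ}
    (hq : 0 < q) (hqr : q ≤ r) (hf : MemLp f (ENNReal.ofReal q) μ) (hf_top : MemLp f ⊤ μ) :
    MemLp f (ENNReal.ofReal r) μ := by
  have hr : 0 < r := hq.trans_le hqr
  refine ⟨hf.1, ?_⟩
  rw [eLpNorm_lt_top_iff_lintegral_rpow_enorm_lt_top (by simpa using hr) ENNReal.ofReal_ne_top,
    ENNReal.toReal_ofReal hr.le]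
  have hint := lintegral_rpow_enorm_lt_top_of_eLpNorm_lt_top (by simpa using hq)
    ENNReal.ofReal_ne_top hf.2
  rw [ENNReal.toReal_ofReal hq.le] at hint
  set M := eLpNormEssSup f μ
  have hM : M ^ (r - q) ≠ ∞ := ENNReal.rpow_ne_top_of_nonneg (sub_nonneg.2 hqr)
    (by simpa [eLpNorm_exponent_top] using hf_top.2.ne)
  have hbd : ∀ᵐ x ∂μ, ‖f x‖ₑ ^ r ≤ M ^ (r - q) * ‖f x‖ₑ ^ q := by
    filter_upwards [ae_le_eLpNormEssSup (f := f)] with x hx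
    calc ‖f x‖ₑ ^ r = ‖f x‖ₑ ^ (r - q) * ‖f x‖ₑ ^ q := by
          rw [← ENNReal.rpow_add_of_nonneg _ _ (sub_nonneg.2 hqr) hq.le, sub_add_cancel]
      _ ≤ M ^ (r - q) * ‖f x‖ₑ ^ q := by gcongr
  calc ∫⁻ x, ‖f x‖ₑ ^ r ∂μ ≤ ∫⁻ x, M ^ (r - q) * ‖f x‖ₑ ^ q ∂μ := lintegral_mono_ae hbd
    _ = M ^ (r - q) * ∫⁻ x, ‖f x‖ₑ ^ q ∂μ := lintegral_const_mul' _ _ hM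
    _ < ∞ := ENNReal.mul_lt_top hM.lt_top hint

theorem memLp_top_of_abs_le_comp_snd {β : Type*} [MeasurableSpace β] {ν : Measure β} [SFinite ν]
    {b : β → ℝ} {R : α × β → ℝ} (hb : MemLp b ⊤ ν) (hR : AEStronglyMeasurable R (μ.prod ν))
    (hRb : ∀ y z, |R (y, z)| ≤ b z) : MemLp R ⊤ (μ.prod ν) := by
  refine memLp_top_of_bound hR (lpNorm b ⊤ ν) ?_
  filter_upwards [Measure.quasiMeasurePreserving_snd.ae (ae_le_lpNorm_exponent_top hb)]
    with p hp
  exact (hRb p.1 p.2).trans ((le_abs_self _).trans hp)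

end Lebesgue

section Convolution

variable {G : Type*} [MeasurableSpace G] [AddGroup G] [MeasurableAdd₂ G] [MeasurableNeg G]
  {μ : Measure G} [SFinite μ] [μ.IsAddRightInvariant]

theorem lintegral_prod_comp_sub_mul {f g : G → ℝ≥0∞} (hf : AEMeasurable f μ)
    (hg : AEMeasurable g μ) :
    ∫⁻ p, f (p.1 - p.2) * g p.2 ∂μ.prod μ = (∫⁻ x, f x ∂μ) * ∫⁻ x, g x ∂μ := by
  have hsub := measurePreserving_sub_prod μ μ
  have hfg : AEMeasurable (fun p : G × G => f p.1 * g p.2) (μ.prod μ) :=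
    hf.comp_fst.mul hg.comp_snd
  calc ∫⁻ p, f (p.1 - p.2) * g p.2 ∂μ.prod μ
      = ∫⁻ p, f p.1 * g p.2 ∂(μ.prod μ).map fun p => (p.1 - p.2, p.2) :=
        (lintegral_map' (hsub.map_eq ▸ hfg) hsub.measurable.aemeasurable).symm
    _ = (∫⁻ x, f x ∂μ) * ∫⁻ x, g x ∂μ := by rw [hsub.map_eq, lintegral_prod_mul hf hg]

theorem memLp_two_mul_of_abs_le_of_abs_le {q : ℝ} (hq : 0 < q) {a b : G → ℝ} {R : G × G → ℝ}
    (ha : MemLp a (ENNReal.ofReal q) μ) (hb : MemLp b (ENNReal.ofReal q) μ)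
    (hR : AEStronglyMeasurable R (μ.prod μ))
    (hRa : ∀ y z, |R (y, z)| ≤ a (y - z)) (hRb : ∀ y z, |R (y, z)| ≤ b z) :
    MemLp R (ENNReal.ofReal (2 * q)) (μ.prod μ) := by
  refine ⟨hR, ?_⟩
  rw [eLpNorm_lt_top_iff_lintegral_rpow_enorm_lt_top (by simp; positivity) ENNReal.ofReal_ne_top,
    ENNReal.toReal_ofReal (by positivity)]
  have henorm_le {x y : ℝ} (h : |x| ≤ y) : ‖x‖ₑ ≤ ‖y‖ₑ := by
    rw [Real.enorm_eq_ofReal_abs, Real.enorm_eq_ofReal_abs]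
    exact ENNReal.ofReal_le_ofReal (h.trans (le_abs_self y))
  have hpt : ∀ p : G × G, ‖R p‖ₑ ^ (2 * q) ≤ ‖a (p.1 - p.2)‖ₑ ^ q * ‖b p.2‖ₑ ^ q := by
    rintro ⟨y, z⟩
    rw [two_mul, ENNReal.rpow_add_of_nonneg _ _ hq.le hq.le]
    gcongr
    exacts [henorm_le (hRa y z), henorm_le (hRb y z)]
  have hfin {f : G → ℝ} (hf : MemLp f (ENNReal.ofReal q) μ) : ∫⁻ x, ‖f x‖ₑ ^ q ∂μ < ∞ := by
    simpa [ENNReal.toReal_ofReal hq.le] using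
      lintegral_rpow_enorm_lt_top_of_eLpNorm_lt_top (by simpa using hq) ENNReal.ofReal_ne_top hf.2
  calc ∫⁻ p, ‖R p‖ₑ ^ (2 * q) ∂μ.prod μ
      ≤ ∫⁻ p, ‖a (p.1 - p.2)‖ₑ ^ q * ‖b p.2‖ₑ ^ q ∂μ.prod μ := lintegral_mono hpt
    _ = (∫⁻ x, ‖a x‖ₑ ^ q ∂μ) * ∫⁻ x, ‖b x‖ₑ ^ q ∂μ :=
        lintegral_prod_comp_sub_mul (ha.1.enorm.pow_const q) (hb.1.enorm.pow_const q)
    _ < ∞ := ENNReal.mul_lt_top (hfin ha) (hfin hb)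

end Convolution

end MeasureTheory

namespace MemLqLinf

variable {q : ℝ} {F : E3 → ℝ}

theorem of_abs_le (hF : MemLqLinf q F) {h : E3 → ℝ} (hh : AEStronglyMeasurable h volume)
    (hle : ∀ x, |h x| ≤ F x) : MemLqLinf q h := by
  have hle' : ∀ᵐ x ∂volume, ‖h x‖ ≤ ‖F x‖ :=
    ae_of_all _ fun x => (hle x).trans (le_abs_self _)
  exact ⟨hF.1.of_le hh hle', hF.2.of_le hh hle'⟩

theorem mono_exponent {r : ℝ} (hq : 0 < q) (hqr : q ≤ r) (hF : MemLqLinf q F) :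
    MemLqLinf r F :=
  ⟨hF.1.of_memLp_top_of_le hq hqr hF.2, hF.2⟩

theorem comp_neg (hF : MemLqLinf q F) : MemLqLinf q fun x => F (-x) :=
  ⟨hF.1.comp_measurePreserving (Measure.measurePreserving_neg volume),
    hF.2.comp_measurePreserving (Measure.measurePreserving_neg volume)⟩

theorem const_mul (hF : MemLqLinf q F) (c : ℝ) : MemLqLinf q fun x => c * F x :=
  ⟨hF.1.const_mul c, hF.2.const_mul c⟩

end MemLqLinf

namespace ConstPlusLqLinf

variable {q : ℝ} {f : E3 → ℝ}

theorem const (q c : ℝ) : ConstPlusLqLinf q fun _ => c :=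
  ⟨c, 0, ⟨MemLp.zero, MemLp.zero⟩, by simp⟩

theorem of_abs_sub_le {F : E3 → ℝ} (hF : MemLqLinf q F) (hf : AEStronglyMeasurable f volume)
    {c : ℝ} (hle : ∀ x, |f x - c| ≤ F x) : ConstPlusLqLinf q f :=
  ⟨c, fun x => f x - c, hF.of_abs_le (hf.sub aestronglyMeasurable_const) hle, by simp⟩

theorem neg (hf : ConstPlusLqLinf q f) : ConstPlusLqLinf q fun x => -f x := by
  obtain ⟨c, h, hh, rfl⟩ := hf
  exact ⟨-c, fun x => -1 * h x, hh.const_mul (-1), by simp [add_comm]⟩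

theorem mono_exponent {r : ℝ} (hq : 0 < q) (hqr : q ≤ r) (hf : ConstPlusLqLinf q f) :
    ConstPlusLqLinf r f := by
  obtain ⟨c, h, hh, rfl⟩ := hf
  exact ⟨c, h, hh.mono_exponent hq hqr, rfl⟩

end ConstPlusLqLinf

theorem classG_tensor {q : ℝ} (hq : 1 ≤ q) {G₁ G₂ G₃ : E3 → ℝ} (h₁ : ConstPlusLqLinf q G₁)
    (h₂ : ConstPlusLqLinf q G₂) (h₃ : ConstPlusLqLinf q G₃) :
    ClassG fun y z => G₁ y * G₂ z * G₃ (y - z) :=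
  ⟨1, q, hq, fun _ => G₁, fun _ => G₂, fun _ => G₃, fun _ => ⟨h₁, h₂, h₃⟩, 0, MemLp.zero,
    MemLp.zero, fun y z => by simp⟩

theorem classG_of_memLp {q : ℝ} (hq : 1 ≤ q) {R : E3 × E3 → ℝ}
    (hR : MemLp R (ENNReal.ofReal q) volume) (hR_top : MemLp R ⊤ volume) :
    ClassG fun y z => R (y, z) :=
  ⟨0, q, hq, fun k => k.elim0, fun k => k.elim0, fun k => k.elim0, fun k => k.elim0, R, hR,
    hR_top, fun y z => by simp⟩

theorem ClassG.add {G H : E3 → E3 → ℝ} (hG : ClassG G) (hH : ClassG H) :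
    ClassG fun y z => G y z + H y z := by
  obtain ⟨K, q, hq, G₁, G₂, G₃, hGk, R, hR, hR_top, hGR⟩ := hG
  obtain ⟨K', q', hq', H₁, H₂, H₃, hHk, R', hR', hR'_top, hHR⟩ := hH
  have hqr : q ≤ max q q' := le_max_left q q'
  have hq'r : q' ≤ max q q' := le_max_right q q'
  have lift {s : ℝ} (hs : 1 ≤ s) (hsr : s ≤ max q q') {f : E3 → ℝ} (hf : ConstPlusLqLinf s f) :
      ConstPlusLqLinf (max q q') f :=
    hf.mono_exponent (by linarith) hsr
  refine ⟨K + K', max q q', hq.trans hqr, Fin.append G₁ H₁, Fin.append G₂ H₂, Fin.append G₃ H₃,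
    Fin.addCases (fun k => ?_) (fun k => ?_), fun p => R p + R' p,
    (hR.of_memLp_top_of_le (by linarith) hqr hR_top).add
      (hR'.of_memLp_top_of_le (by linarith) hq'r hR'_top),
    hR_top.add hR'_top, fun y z => ?_⟩
  · simp only [Fin.append_left]
    exact ⟨lift hq hqr (hGk k).1, lift hq hqr (hGk k).2.1, lift hq hqr (hGk k).2.2⟩
  · simp only [Fin.append_right]
    exact ⟨lift hq' hq'r (hHk k).1, lift hq' hq'r (hHk k).2.1, lift hq' hq'r (hHk k).2.2⟩
  · simp only [Fin.sum_univ_add, Fin.append_left, Fin.append_right, hGR, hHR]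
    ring

section Symmetry

variable {α β : Type*} [AddCommGroup α]

theorem apply_eq_apply_zero_sub {g : α → α → β} (hperm : ∀ a b, g a b = g b a)
    (htrans : ∀ a b t, g (a + t) (b + t) = g a b) (y z : α) : g y z = g 0 (y - z) := by
  rw [hperm, ← htrans 0 (y - z) z, zero_add, sub_add_cancel]

theorem apply_zero_neg {g : α → α → β} (hperm : ∀ a b, g a b = g b a)
    (htrans : ∀ a b t, g (a + t) (b + t) = g a b) (w : α) : g 0 (-w) = g 0 w := by
  rw [← htrans 0 (-w) w, zero_add, neg_add_cancel, hperm]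

theorem apply_zero_eq_apply_zero_neg {g : α → α → α → β} (hperm : ∀ a b c, g a b c = g b a c)
    (htrans : ∀ a b c t, g (a + t) (b + t) (c + t) = g a b c) (y z : α) :
    g 0 y z = g 0 (-y) (z - y) :=
  calc g 0 y z = g (-y + y) (0 + y) (z - y + y) := by simp
    _ = g (-y) 0 (z - y) := htrans _ _ _ _
    _ = g 0 (-y) (z - y) := hperm _ _ _

end Symmetry

theorem abs_div_self_mul_le (u x : ℝ) : |u / u * x| ≤ |x| := by
  rcases eq_or_ne u 0 with rfl | hu
  · simp
  · simp [div_self hu]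

theorem abs_div_self_sub_one_le (u : ℝ) : |u / u - 1| ≤ |u - 1| := by
  rcases eq_or_ne u 0 with rfl | hu
  · simp
  · simp [div_self hu]

section Quotient

variable {g₂ : E3 → E3 → ℝ} {g₃ : E3 → E3 → E3 → ℝ}

/-- What is left of `g₃(0,y,z)/g₂(0,y)` after the three tensor terms. The factor
`g₂(0,y)/g₂(0,y)` is the indicator of `{g₂(0,·) ≠ 0}`, by the convention `x / 0 = 0`. -/
def quotientRemainder (g₂ : E3 → E3 → ℝ) (g₃ : E3 → E3 → E3 → ℝ) (p : E3 × E3) : ℝ :=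
  g₃ 0 p.1 p.2 / g₂ 0 p.1 - g₂ 0 p.1 / g₂ 0 p.1 * (g₂ 0 p.2 + g₂ 0 (p.1 - p.2) - 1)

theorem measurable_quotientRemainder (hg₂ : Measurable fun p : E3 × E3 => g₂ p.1 p.2)
    (hg₃ : Measurable fun p : E3 × E3 × E3 => g₃ p.1 p.2.1 p.2.2) :
    Measurable (quotientRemainder g₂ g₃) := by
  have hu : Measurable fun y => g₂ 0 y := hg₂.comp (measurable_const.prodMk measurable_id)
  have hv : Measurable fun p : E3 × E3 => g₃ 0 p.1 p.2 :=
    hg₃.comp (measurable_const.prodMk measurable_id)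
  unfold quotientRemainder
  fun_prop

theorem abs_quotientRemainder_le_of_eq_mul {y z : E3} {r : ℝ}
    (hg₃ : g₃ 0 y z = g₂ 0 y * (g₂ 0 z + r)) :
    |quotientRemainder g₂ g₃ (y, z)| ≤ |r| + |g₂ 0 (y - z) - 1| := by
  have hR : quotientRemainder g₂ g₃ (y, z) = g₂ 0 y / g₂ 0 y * (r - (g₂ 0 (y - z) - 1)) := by
    rw [quotientRemainder, hg₃]
    ring
  rw [hR]
  exact (abs_div_self_mul_le _ _).trans (abs_sub _ _)

theorem abs_quotientRemainder_le_of_eq_mul' {y z : E3} {r : ℝ}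
    (hg₃ : g₃ 0 y z = g₂ 0 y * (g₂ 0 (y - z) + r)) :
    |quotientRemainder g₂ g₃ (y, z)| ≤ |r| + |g₂ 0 z - 1| := by
  have hR : quotientRemainder g₂ g₃ (y, z) = g₂ 0 y / g₂ 0 y * (r - (g₂ 0 z - 1)) := by
    rw [quotientRemainder, hg₃]
    ring
  rw [hR]
  exact (abs_div_self_mul_le _ _).trans (abs_sub _ _)

variable {q : ℝ} {F : E3 → ℝ} {R₂ : E3 → E3 → ℝ}

theorem memLp_quotientRemainder (hq : 0 < q) (hF : MemLqLinf q F)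
    (hg₂meas : Measurable fun p : E3 × E3 => g₂ p.1 p.2)
    (hg₃meas : Measurable fun p : E3 × E3 × E3 => g₃ p.1 p.2.1 p.2.2)
    (hg₂perm : ∀ a b, g₂ a b = g₂ b a) (hg₃perm₁ : ∀ a b c, g₃ a b c = g₃ b a c)
    (hg₂trans : ∀ a b t : E3, g₂ (a + t) (b + t) = g₂ a b)
    (hg₃trans : ∀ a b c t : E3, g₃ (a + t) (b + t) (c + t) = g₃ a b c)
    (hH2 : ∀ y : E3, |g₂ 0 y - 1| ≤ F y)
    (hg₃ : ∀ y z : E3, g₃ 0 y z = g₂ 0 y * (g₂ 0 z + R₂ y z))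
    (hR₂ : ∀ y z : E3, |R₂ y z| ≤ F (y - z)) :
    MemLp (quotientRemainder g₂ g₃) (ENNReal.ofReal (2 * q)) volume ∧
      MemLp (quotientRemainder g₂ g₃) ⊤ volume := by
  have heven := apply_zero_neg hg₂perm hg₂trans
  have hle_sub (y z : E3) : |quotientRemainder g₂ g₃ (y, z)| ≤ 2 * F (y - z) := by
    linarith [abs_quotientRemainder_le_of_eq_mul (hg₃ y z), hR₂ y z, hH2 (y - z)]
  have hle_neg (y z : E3) : |quotientRemainder g₂ g₃ (y, z)| ≤ 2 * F (-z) := by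
    have hg₃' : g₃ 0 y z = g₂ 0 y * (g₂ 0 (y - z) + R₂ (-y) (z - y)) := by
      rw [apply_zero_eq_apply_zero_neg hg₃perm₁ hg₃trans, hg₃, heven, ← heven (z - y), neg_sub]
    have hR₂' := hR₂ (-y) (z - y)
    rw [show -y - (z - y) = -z by abel] at hR₂'
    linarith [abs_quotientRemainder_le_of_eq_mul' hg₃', heven z ▸ hH2 (-z)]
  have hmeas : AEStronglyMeasurable (quotientRemainder g₂ g₃) (volume.prod volume) :=
    (measurable_quotientRemainder hg₂meas hg₃meas).aestronglyMeasurable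
  rw [Measure.volume_eq_prod]
  exact ⟨memLp_two_mul_of_abs_le_of_abs_le hq (hF.const_mul 2).1 (hF.comp_neg.const_mul 2).1
      hmeas hle_sub hle_neg,
    memLp_top_of_abs_le_comp_snd (hF.comp_neg.const_mul 2).2 hmeas hle_neg⟩

end Quotient

theorem classG_g₃_div_g₂ {g₂ : E3 → E3 → ℝ} {g₃ : E3 → E3 → E3 → ℝ}
    (hg₂meas : Measurable fun p : E3 × E3 => g₂ p.1 p.2)
    (hg₃meas : Measurable fun p : E3 × E3 × E3 => g₃ p.1 p.2.1 p.2.2)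
    (hg₂perm : ∀ a b, g₂ a b = g₂ b a) (hg₃perm₁ : ∀ a b c, g₃ a b c = g₃ b a c)
    (hg₂trans : ∀ a b t : E3, g₂ (a + t) (b + t) = g₂ a b)
    (hg₃trans : ∀ a b c t : E3, g₃ (a + t) (b + t) (c + t) = g₃ a b c)
    {q : ℝ} (hq : 1 < q) {F : E3 → ℝ} (hF : MemLqLinf q F)
    (hH2 : ∀ y : E3, |g₂ 0 y - 1| ≤ F y)
    (hH3 : ∃ R₂ : E3 → E3 → ℝ,
        (∀ y z : E3, g₃ 0 y z = g₂ 0 y * (g₂ 0 z + R₂ y z)) ∧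
        ∀ y z : E3, |R₂ y z| ≤ F (y - z)) :
    ClassG fun y z => g₃ 0 y z / g₂ 0 y := by
  obtain ⟨R₂, hg₃, hR₂⟩ := hH3
  have hu_meas : Measurable fun y => g₂ 0 y :=
    hg₂meas.comp (measurable_const.prodMk measurable_id)
  have hu : ConstPlusLqLinf q fun y => g₂ 0 y :=
    .of_abs_sub_le hF hu_meas.aestronglyMeasurable hH2
  have hχ : ConstPlusLqLinf q fun y => g₂ 0 y / g₂ 0 y :=
    .of_abs_sub_le hF (hu_meas.div hu_meas).aestronglyMeasurable
      fun y => (abs_div_self_sub_one_le _).trans (hH2 y)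
  have hone := ConstPlusLqLinf.const q 1
  obtain ⟨hR, hR_top⟩ := memLp_quotientRemainder (by linarith) hF hg₂meas hg₃meas hg₂perm
    hg₃perm₁ hg₂trans hg₃trans hH2 hg₃ hR₂
  have hdecomp : (fun y z => g₃ 0 y z / g₂ 0 y) = fun y z =>
      g₂ 0 y / g₂ 0 y * g₂ 0 z * 1 + g₂ 0 y / g₂ 0 y * 1 * g₂ 0 (y - z)
        + -(g₂ 0 y / g₂ 0 y) * 1 * 1 + quotientRemainder g₂ g₃ (y, z) := by
    ext y z
    rw [quotientRemainder]
    ring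
  rw [hdecomp]
  exact (((classG_tensor hq.le hχ hu hone).add (classG_tensor hq.le hχ hone hu)).add
    (classG_tensor hq.le hχ.neg hone hone)).add (classG_of_memLp (by linarith) hR hR_top)

theorem correlation_functions_mem_classG_general
    (g₂ : E3 → E3 → ℝ) (g₃ : E3 → E3 → E3 → ℝ)
    (hg₂meas : Measurable fun p : E3 × E3 => g₂ p.1 p.2)
    (hg₃meas : Measurable fun p : E3 × E3 × E3 => g₃ p.1 p.2.1 p.2.2)
    (hg₂perm : ∀ a b, g₂ a b = g₂ b a)
    (hg₃perm₁ : ∀ a b c, g₃ a b c = g₃ b a c)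
    (hg₂trans : ∀ a b t : E3, g₂ (a + t) (b + t) = g₂ a b)
    (hg₃trans : ∀ a b c t : E3, g₃ (a + t) (b + t) (c + t) = g₃ a b c)
    (q : ℝ) (hq : 1 < q) (F : E3 → ℝ) (hF : MemLqLinf q F)
    (hH2 : ∀ y : E3, |g₂ 0 y - 1| ≤ F y)
    (hH3 : ∃ R₂ : E3 → E3 → ℝ,
        (∀ y z : E3, g₃ 0 y z = g₂ 0 y * (g₂ 0 z + R₂ y z)) ∧
        ∀ y z : E3, |R₂ y z| ≤ F (y - z))
    :
    ClassG (fun y _z => g₂ 0 y) ∧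
    ClassG (fun _y z => g₂ 0 z) ∧
    ClassG (fun y z => g₂ y z) ∧
    ClassG (fun y z => g₃ 0 y z / g₂ 0 y) := by
  have hu : ConstPlusLqLinf q fun y => g₂ 0 y :=
    .of_abs_sub_le hF (hg₂meas.comp (measurable_const.prodMk measurable_id)).aestronglyMeasurable
      hH2
  have hone := ConstPlusLqLinf.const q 1
  have hg₂ : (fun y z => g₂ y z) = fun y z => 1 * 1 * g₂ 0 (y - z) := by
    ext y z
    rw [one_mul, one_mul, apply_eq_apply_zero_sub hg₂perm hg₂trans]
  refine ⟨?_, ?_, ?_, classG_g₃_div_g₂ hg₂meas hg₃meas hg₂perm hg₃perm₁ hg₂trans hg₃trans hq hF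
    hH2 hH3⟩
  · simpa using classG_tensor hq.le hu hone hone
  · simpa using classG_tensor hq.le hone hu hone
  · exact hg₂ ▸ classG_tensor hq.le hone hone hu

/-- Under (H2)–(H3), the functions `(y,z) ↦ g₂(0,y)`, `(y,z) ↦ g₂(0,z)`,
`(y,z) ↦ g₂(y,z)` and `(y,z) ↦ g₃(0,y,z)/g₂(0,y)` belong to the class `𝒢`. -/
theorem correlation_functions_mem_classG
    (g₂ : E3 → E3 → ℝ) (g₃ : E3 → E3 → E3 → ℝ)
    (hg₂meas : Measurable fun p : E3 × E3 => g₂ p.1 p.2)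
    (hg₃meas : Measurable fun p : E3 × E3 × E3 => g₃ p.1 p.2.1 p.2.2)
    (hg₂nonneg : ∀ a b, 0 ≤ g₂ a b) (hg₃nonneg : ∀ a b c, 0 ≤ g₃ a b c)
    (hg₂bdd : ∃ C : ℝ, ∀ a b, g₂ a b ≤ C) (hg₃bdd : ∃ C : ℝ, ∀ a b c, g₃ a b c ≤ C)
    (hg₂perm : ∀ a b, g₂ a b = g₂ b a)
    (hg₃perm₁ : ∀ a b c, g₃ a b c = g₃ b a c)
    (hg₃perm₂ : ∀ a b c, g₃ a b c = g₃ a c b)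
    (hg₂trans : ∀ a b t : E3, g₂ (a + t) (b + t) = g₂ a b)
    (hg₃trans : ∀ a b c t : E3, g₃ (a + t) (b + t) (c + t) = g₃ a b c)
    (q : ℝ) (hq : 1 < q) (F : E3 → ℝ) (hF : MemLqLinf q F)
    (hF0 : Tendsto F (cocompact E3) (nhds 0))
    (hH2 : ∀ y : E3, |g₂ 0 y - 1| ≤ F y)
    (hH3 : ∃ R₂ : E3 → E3 → ℝ,
        (∀ y z : E3, g₃ 0 y z = g₂ 0 y * (g₂ 0 z + R₂ y z)) ∧
        ∀ y z : E3, |R₂ y z| ≤ F (y - z))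
    (hv₂₃ : ∀ a b c : E3, g₂ a b = 0 → g₃ a b c = 0)
    :
    ClassG (fun y _z => g₂ 0 y) ∧
    ClassG (fun _y z => g₂ 0 z) ∧
    ClassG (fun y z => g₂ y z) ∧
    ClassG (fun y z => g₃ 0 y z / g₂ 0 y) :=
  correlation_functions_mem_classG_general g₂ g₃ hg₂meas hg₃meas hg₂perm hg₃perm₁ hg₂trans hg₃trans
    q hq F hF hH2 hH3
end
end
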